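/- arXiv:math/0407199 — 16 statements merged into one kernel-verified Lean document; each statement's English description precedes it below -/
import Mathlib

section
/- Let G be a group and H an infinite subgroup of G that is wq-normal in G, i.e. for every subgroup K of G with H ≤ K and K ≠ G there exists g ∈ G \ K with gKg⁻¹ ∩ K infinite. If G is a normal subgroup of a group Ḡ, then H is wq-normal in Ḡ: for every subgroup K of Ḡ with H ≤ K and K ≠ Ḡ there exists g ∈ Ḡ \ K such that gKg⁻¹ ∩ K is infinite. -/
/-!
If `G ≤ K`, then normality of `G` puts `G` inside every conjugate of `K`, so any `g ∉ K` works: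
`gKg⁻¹ ∩ K` contains `G ⊇ H`, which is infinite. Otherwise `K ∩ G` is a proper subgroup of `G`
containing `H`, and the element `g ∈ G` given by wq-normality of `H` in `G` also works in `Ḡ`,
because `g(K ∩ G)g⁻¹ ∩ (K ∩ G)` embeds into `gKg⁻¹ ∩ K`.
-/

namespace Subgroup

variable {G : Type*} [Group G]

lemma infinite_of_map_le {G' : Type*} [Group G'] {f : G →* G'} (hf : Function.Injective f)
    {A : Subgroup G} [Infinite A] {B : Subgroup G'} (h : A.map f ≤ B) : Infinite B :=
  have : Infinite (A.map f) := Infinite.of_injective _ (A.equivMapOfInjective f hf).injective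
  Infinite.of_injective _ (inclusion_injective h)

lemma le_map_conj_inf_of_normal_le {N K : Subgroup G} [N.Normal] (hNK : N ≤ K) (g : G) :
    N ≤ K.map (MulAut.conj g).toMonoidHom ⊓ K :=
  fun x hx => ⟨mem_map_equiv.mpr (hNK (by simpa using ‹N.Normal›.conj_mem' x hx g)), hNK hx⟩

lemma map_subtype_map_conj_subgroupOf_inf_le (N K : Subgroup G) (g : N) :
    (((K.subgroupOf N).map (MulAut.conj g).toMonoidHom ⊓ K.subgroupOf N).map N.subtype) ≤
      K.map (MulAut.conj (g : G)).toMonoidHom ⊓ K := by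
  rintro _ ⟨x, ⟨⟨k, hk, rfl⟩, hx⟩, rfl⟩
  exact ⟨⟨k, hk, rfl⟩, hx⟩

end Subgroup

/-- wq-normality passes to normal extensions: if `H` is an infinite wq-normal subgroup of `G`
and `G` is a normal subgroup of `Ḡ`, then `H` is wq-normal in `Ḡ`. -/
theorem stmt1 {Gbar : Type*} [Group Gbar] (G : Subgroup Gbar) [G.Normal]
    (H : Subgroup G) [Infinite H]
    (hwq : ∀ K : Subgroup G, H ≤ K → K ≠ ⊤ →
      ∃ g : G, g ∉ K ∧ Infinite ↥(Subgroup.map (MulAut.conj g).toMonoidHom K ⊓ K)) :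
    ∀ K : Subgroup Gbar, Subgroup.map G.subtype H ≤ K → K ≠ ⊤ →
      ∃ g : Gbar, g ∉ K ∧ Infinite ↥(Subgroup.map (MulAut.conj g).toMonoidHom K ⊓ K) := by
  intro K hHK hK
  by_cases hGK : G ≤ K
  · obtain ⟨g, hg⟩ := SetLike.exists_not_mem_of_ne_top K hK
    exact ⟨g, hg, Subgroup.infinite_of_map_le G.subtype_injective
      ((Subgroup.map_subtype_le H).trans (Subgroup.le_map_conj_inf_of_normal_le hGK g))⟩
  · have hHK' : H ≤ K.subgroupOf G := fun h hh => hHK ⟨h, hh, rfl⟩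
    obtain ⟨g, hg, hinf⟩ := hwq _ hHK' (mt Subgroup.subgroupOf_eq_top.mp hGK)
    exact ⟨g, hg, Subgroup.infinite_of_map_le G.subtype_injective
      (Subgroup.map_subtype_map_conj_subgroupOf_inf_le G K g)⟩
end

section
/- Let H and H' be groups with H' nontrivial, let G = H ∗ H' be their free product (the coproduct of the groups H and H'), and identify H with its canonical image inl(H) ≤ G. Then: (a) for every g ∈ G with g ∉ inl(H), the subgroup g·inl(H)·g⁻¹ ∩ inl(H) is trivial; (b) consequently, if H is infinite then inl(H) is not wq-normal in G, i.e. there exists a subgroup K of G with inl(H) ≤ K and K ≠ G such that gKg⁻¹ ∩ K is finite for every g ∈ G \ K. -/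
open Monoid Monoid.CoprodI

section Key
variable {ι : Type*} {G : ι → Type*} [∀ i, Group (G i)]

theorem key_lemma {i : ι} (g : CoprodI G) (h : G i) (hh : h ≠ 1)
    (hmem : g⁻¹ * CoprodI.of h * g ∈ (CoprodI.of : G i →* CoprodI G).range) :
    g ∈ (CoprodI.of : G i →* CoprodI G).range := by
  classical
  set w := Word.equiv (M := G) g with hw
  set p := Word.equivPair i w with hp
  have hg : g = CoprodI.of p.head * Word.prod p.tail := by
    conv_lhs => rw [← (Word.equiv (M := G)).symm_apply_apply g]
    have : (Word.equiv (M := G)).symm w = Word.prod w := rfl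
    rw [this, ← Word.equivPair_head_smul_equivPair_tail (i := i) w, Word.prod_smul, hp]
  by_cases hte : p.tail = Word.empty
  · rw [hg, hte]
    simp only [Word.prod_empty, mul_one]; exact ⟨p.head, rfl⟩
  · exfalso
    obtain ⟨b, hb⟩ := hmem
    obtain ⟨j, k, n, hn⟩ := NeWord.of_word p.tail hte
    have htl : n.toList = p.tail.toList := congrArg Word.toList hn
    have hji : j ≠ i := by
      intro e
      apply p.fstIdx_ne
      rw [Word.fstIdx, ← htl, NeWord.toList_head?]
      simpa using e
    set h' := p.head⁻¹ * h * p.head with hh'def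
    have hh' : h' ≠ 1 := by
      simp only [hh'def, ne_eq, mul_assoc]
      intro e
      exact hh (by
        have := congrArg (fun x => p.head * x * p.head⁻¹) e
        simpa [mul_assoc] using this)
    set N : NeWord G k k := (n.inv.append hji (NeWord.singleton h' hh')).append hji.symm n
      with hN
    have hnprod : n.prod = Word.prod p.tail := by
      rw [NeWord.prod, hn]
    have hNprod : N.prod = CoprodI.of b := by
      have : CoprodI.of b = (Word.prod p.tail)⁻¹ * CoprodI.of h' * Word.prod p.tail := by
        rw [hb, hg, hh'def]
        simp [mul_assoc]
      rw [this, hN]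
      simp [hnprod, mul_assoc]
    have hEq : N.toWord = Word.equiv (M := G) (CoprodI.of b) := by
      have h1 : (Word.equiv (M := G)).symm N.toWord = CoprodI.of b := by
        show Word.prod N.toWord = CoprodI.of b
        rw [← NeWord.prod, hNprod]
      rw [← h1, Equiv.apply_symm_apply]
    have hlen2 : 2 ≤ N.toWord.toList.length := by
      show 2 ≤ N.toList.length
      rw [hN]
      simp only [NeWord.toList, List.length_append]
      have l1 : 1 ≤ n.inv.toList.length := List.length_pos_iff.2 n.inv.toList_ne_nil
      have l2 : 1 ≤ n.toList.length := List.length_pos_iff.2 n.toList_ne_nil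
      simp only [List.length_singleton]
      omega
    have hlen1 : (Word.equiv (M := G) (CoprodI.of b)).toList.length ≤ 1 := by
      have : Word.equiv (M := G) (CoprodI.of b) = CoprodI.of b • Word.empty := rfl
      rw [this, Word.of_smul_def]
      rw [Word.equivPair_eq_of_fstIdx_ne (by simp [Word.fstIdx, Word.empty])]
      simp only [Word.rcons]
      split_ifs <;> simp [Word.cons, Word.empty]
    rw [← hEq] at hlen1
    omega

end Key

section Transfer

universe u v

variable (H : Type u) (H' : Type v) [Group H] [Group H']

/-- The two-element family of groups `![ULift H, ULift H']` indexed by `Bool`. -/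
private def fam : Bool → Type (max u v) := fun b => cond b (ULift.{v} H) (ULift.{u} H')

private instance : ∀ b, Group (fam H H' b) := fun b => by
  cases b <;> exact ULift.group

/-- The canonical map `H ∗ H' →* CoprodI (fam H H')`. -/
private def phi : Coprod H H' →* CoprodI (fam H H') :=
  Coprod.lift
    ((CoprodI.of (i := true)).comp (MulEquiv.ulift.symm.toMonoidHom))
    ((CoprodI.of (i := false)).comp (MulEquiv.ulift.symm.toMonoidHom))

/-- The canonical map `CoprodI (fam H H') →* H ∗ H'`. -/
private def psi : CoprodI (fam H H') →* Coprod H H' :=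
  CoprodI.lift fun b => match b with
    | true => (Coprod.inl : H →* Coprod H H').comp MulEquiv.ulift.toMonoidHom
    | false => (Coprod.inr : H' →* Coprod H H').comp MulEquiv.ulift.toMonoidHom

private theorem psi_phi (g : Coprod H H') : psi H H' (phi H H' g) = g := by
  have : (psi H H').comp (phi H H') = MonoidHom.id _ := by
    apply Coprod.hom_ext <;> ext x <;> rfl
  exact DFunLike.congr_fun this g

private theorem phi_inl (h : H) :
    phi H H' (Coprod.inl h) = CoprodI.of (M := fam H H') (i := true) ⟨h⟩ := rfl

private theorem mem_range_iff (g : Coprod H H') :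
    g ∈ (Coprod.inl : H →* Coprod H H').range ↔
      phi H H' g ∈ (CoprodI.of : fam H H' true →* _).range := by
  constructor
  · rintro ⟨h, rfl⟩
    exact ⟨⟨h⟩, rfl⟩
  · rintro ⟨x, hx⟩
    refine ⟨x.down, ?_⟩
    have := congrArg (psi H H') hx
    rw [psi_phi] at this
    rw [← this]
    rfl

end Transfer

/-- Part (a) as a standalone statement. -/
private theorem part_a {H H' : Type*} [Group H] [Group H'] (g : Coprod H H')
    (hg : g ∉ (Coprod.inl : H →* Coprod H H').range) :
    Subgroup.map (MulAut.conj g).toMonoidHom (Coprod.inl : H →* Coprod H H').range ⊓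
      (Coprod.inl : H →* Coprod H H').range = ⊥ := by
  rw [eq_bot_iff]
  rintro x ⟨hx1, hx2⟩
  obtain ⟨y, ⟨h, rfl⟩, hy⟩ := hx1
  by_cases hh : h = 1
  · subst hh
    simp only [map_one] at hy
    simp [← hy, Subgroup.mem_bot]
  · exfalso
    apply hg
    have hy' : g * Coprod.inl h * g⁻¹ = x := by
      simpa [MulAut.conj] using hy
    rw [mem_range_iff]
    have hne : (⟨h⟩ : ULift H) ≠ 1 := fun e => hh (congrArg ULift.down e)
    have hkey := key_lemma (i := true) (phi H H' g)⁻¹ (⟨h⟩ : ULift H) hne ?_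
    · simpa using (Subgroup.inv_mem_iff _).1 hkey
    · rw [inv_inv]
      obtain ⟨h', hh'⟩ := hx2
      refine ⟨⟨h'⟩, ?_⟩
      rw [← phi_inl, hh', ← hy']
      simp [phi_inl, map_mul]

/-- In a free product `G = H ∗ H'` with `H'` nontrivial: (a) for every `g` outside the canonical
copy of `H`, the intersection `g·inl(H)·g⁻¹ ∩ inl(H)` is trivial; (b) if moreover `H` is infinite,
then `inl(H)` is not wq-normal in `G`: there is a subgroup `inl(H) ≤ K ⊊ G` such that
`gKg⁻¹ ∩ K` is finite for every `g ∉ K`. -/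
theorem stmt2 {H H' : Type*} [Group H] [Group H'] [Nontrivial H'] :
    (∀ g : Coprod H H', g ∉ (Coprod.inl : H →* Coprod H H').range →
      Subgroup.map (MulAut.conj g).toMonoidHom (Coprod.inl : H →* Coprod H H').range ⊓
        (Coprod.inl : H →* Coprod H H').range = ⊥)
    ∧ (Infinite H →
      ∃ K : Subgroup (Coprod H H'), (Coprod.inl : H →* Coprod H H').range ≤ K ∧ K ≠ ⊤ ∧
        ∀ g : Coprod H H', g ∉ K →
          ((Subgroup.map (MulAut.conj g).toMonoidHom K ⊓ K :
            Subgroup (Coprod H H')) : Set (Coprod H H')).Finite) := by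
  refine ⟨fun g hg => part_a g hg, fun _ => ?_⟩
  refine ⟨(Coprod.inl : H →* Coprod H H').range, le_refl _, ?_, ?_⟩
  · intro htop
    obtain ⟨b, hb⟩ := exists_ne (1 : H')
    have : Coprod.inr b ∈ (Coprod.inl : H →* Coprod H H').range := htop ▸ Subgroup.mem_top _
    obtain ⟨h, hh⟩ := this
    have := congrArg (Coprod.snd) hh
    simp at this
    exact hb this.symm
  · intro g hg
    rw [part_a g hg]
    simp
end

section
/- Let G be a countable group and H ≤ G an infinite subgroup such that the pair (G,H) has the relative property (T), meaning: for every complex Hilbert space 𝓗 and every unitary representation π of G on 𝓗 (a group homomorphism from G into the unitary group of 𝓗), if for every finite subset F ⊆ G and every ε > 0 there exists a unit vector ξ ∈ 𝓗 with ‖π(g)ξ − ξ‖ ≤ ε for all g ∈ F, then there exists a nonzero vector ξ₀ ∈ 𝓗 with π(h)ξ₀ = ξ₀ for all h ∈ H. Let σ be a free measure-preserving action of G on a probability space (X,μ) such that the restriction of σ to H is ergodic. Then σ is strongly ergodic: for every sequence (Aₙ) of measurable subsets of X such that for every g ∈ G the measures μ((g • Aₙ) Δ Aₙ) tend to 0 as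 n → ∞, one has μ(Aₙ)·(1 − μ(Aₙ)) → 0 as n → ∞. -/
open MeasureTheory Filter Pointwise
open scoped symmDiff

/-!
If strong ergodicity failed, the mean-zero indicators `1_{A n} - μ (A n)`, normalised, would
be almost invariant unit vectors for the Koopman representation of `G` on `L²(μ)`. Relative
property (T) then yields a nonzero `H`-invariant vector orthogonal to the constants, i.e. a
non-constant `H`-invariant function, contradicting ergodicity of `H`. Property (T) is only
quantified over Hilbert spaces in `Type`, so one works in the closed `G`-invariant subspace
spanned by the orbits of these vectors: it is separable because `G` is countable, hence has
an isometric copy in `Type`.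
-/

open TopologicalSpace Topology
open scoped InnerProductSpace

noncomputable section

section Representation

variable {G 𝕜 E : Type*} [Group G] [RCLike 𝕜] [NormedAddCommGroup E] [NormedSpace 𝕜 E]

def HasAlmostInvariantVectors (π : G →* (E ≃ₗᵢ[𝕜] E)) : Prop :=
  ∀ (F : Finset G) (ε : ℝ), 0 < ε → ∃ ξ : E, ‖ξ‖ = 1 ∧ ∀ g ∈ F, ‖π g ξ - ξ‖ ≤ ε

theorem hasAlmostInvariantVectors_of_not_tendsto_norm (π : G →* (E ≃ₗᵢ[𝕜] E)) (v : ℕ → E)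
    (hv : ∀ g, Tendsto (fun n => ‖π g (v n) - v n‖) atTop (𝓝 0))
    (hnorm : ¬Tendsto (fun n => ‖v n‖) atTop (𝓝 0)) :
    HasAlmostInvariantVectors π := by
  intro F ε hε
  obtain ⟨δ, hδ, hfreq⟩ : ∃ δ > 0, ∃ᶠ n in atTop, δ ≤ ‖v n‖ := by
    simpa [Metric.tendsto_nhds, Real.dist_eq, frequently_atTop] using hnorm
  have hclose : ∀ᶠ n in atTop, ∀ g ∈ F, ‖π g (v n) - v n‖ ≤ ε * δ :=
    (eventually_all_finset F).2 fun g _ => (hv g).eventually_le_const (mul_pos hε hδ)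
  obtain ⟨n, hnδ, hn⟩ := (hfreq.and_eventually hclose).exists
  have hvn : 0 < ‖v n‖ := hδ.trans_le hnδ
  refine ⟨(‖v n‖⁻¹ : 𝕜) • v n, norm_smul_inv_norm (norm_pos_iff.1 hvn), fun g hg => ?_⟩
  calc ‖π g ((‖v n‖⁻¹ : 𝕜) • v n) - (‖v n‖⁻¹ : 𝕜) • v n‖
      = ‖v n‖⁻¹ * ‖π g (v n) - v n‖ := by
        rw [map_smul, ← smul_sub, norm_smul, norm_inv, RCLike.norm_ofReal, abs_norm]
    _ ≤ ‖v n‖⁻¹ * (ε * ‖v n‖) := by gcongr; exact (hn g hg).trans (by gcongr)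
    _ = ε := by field_simp

def restrictRep (π : G →* (E ≃ₗᵢ[𝕜] E)) (p : Submodule 𝕜 E) (hp : ∀ g, ∀ x ∈ p, π g x ∈ p) :
    G →* (p ≃ₗᵢ[𝕜] p) where
  toFun g :=
    { toFun x := ⟨π g x, hp g x x.2⟩
      invFun x := ⟨π g⁻¹ x, hp g⁻¹ x x.2⟩
      map_add' x y := by ext; simp
      map_smul' c x := by ext; simp
      left_inv x := by ext; simp [LinearIsometryEquiv.coe_inv]
      right_inv x := by ext; simp [LinearIsometryEquiv.coe_inv]
      norm_map' x := (π g).norm_map x }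
  map_one' := by ext; simp
  map_mul' g h := by ext; simp [map_mul]

def invariantSpan {ι : Type*} (π : G →* (E ≃ₗᵢ[𝕜] E)) (v : ι → E) : Submodule 𝕜 E :=
  (Submodule.span 𝕜 (Set.range fun p : G × ι => π p.1 (v p.2))).topologicalClosure

section invariantSpan

variable {ι : Type*} (π : G →* (E ≃ₗᵢ[𝕜] E)) (v : ι → E)

theorem mem_invariantSpan (i : ι) : v i ∈ invariantSpan π v :=
  Submodule.le_topologicalClosure _ <| Submodule.subset_span ⟨(1, i), by simp⟩

theorem map_mem_invariantSpan (g : G) (x : E) (hx : x ∈ invariantSpan π v) :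
    π g x ∈ invariantSpan π v := by
  have hspan : Submodule.span 𝕜 (Set.range fun p : G × ι => π p.1 (v p.2)) ≤
      (invariantSpan π v).comap (π g).toLinearEquiv.toLinearMap := by
    refine Submodule.span_le.2 ?_
    rintro _ ⟨⟨h, i⟩, rfl⟩
    refine Submodule.le_topologicalClosure _ (Submodule.subset_span ⟨(g * h, i), ?_⟩)
    simp [map_mul]
  exact Submodule.topologicalClosure_minimal _ hspan
    ((Submodule.isClosed_topologicalClosure _).preimage (π g).continuous) hx

theorem invariantSpan_le {p : Submodule 𝕜 E} (hp : IsClosed (p : Set E))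
    (hv : ∀ g i, π g (v i) ∈ p) : invariantSpan π v ≤ p := by
  refine Submodule.topologicalClosure_minimal _ (Submodule.span_le.2 ?_) hp
  rintro _ ⟨⟨g, i⟩, rfl⟩
  exact hv g i

instance [Countable G] [Countable ι] : SeparableSpace (invariantSpan π v) := by
  refine IsSeparable.separableSpace ?_
  rw [invariantSpan, Submodule.topologicalClosure_coe]
  exact ((Set.countable_range _).isSeparable.span).closure

instance [CompleteSpace E] : CompleteSpace (invariantSpan π v) :=
  (Submodule.isClosed_topologicalClosure _).completeSpace_coe

end invariantSpan

end Representation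

section RelativePropertyT

variable {G : Type*} [Group G]

def RelativePropertyT (H : Subgroup G) : Prop :=
  ∀ (𝓗 : Type) [NormedAddCommGroup 𝓗] [InnerProductSpace ℂ 𝓗] [CompleteSpace 𝓗]
    (π : G →* (𝓗 ≃ₗᵢ[ℂ] 𝓗)), HasAlmostInvariantVectors π → ∃ ξ : 𝓗, ξ ≠ 0 ∧ ∀ h ∈ H, π h ξ = ξ

variable {𝕜 E F : Type*} [RCLike 𝕜] [NormedAddCommGroup E] [NormedSpace 𝕜 E]
  [NormedAddCommGroup F] [NormedSpace 𝕜 F]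

def conjRep (e : F ≃ₗᵢ[𝕜] E) (π : G →* (E ≃ₗᵢ[𝕜] E)) : G →* (F ≃ₗᵢ[𝕜] F) where
  toFun g := e.trans ((π g).trans e.symm)
  map_one' := by ext; simp
  map_mul' g h := by ext; simp [map_mul]

@[simp]
theorem conjRep_apply (e : F ≃ₗᵢ[𝕜] E) (π : G →* (E ≃ₗᵢ[𝕜] E)) (g : G) (x : F) :
    conjRep e π g x = e.symm (π g (e x)) :=
  rfl

theorem HasAlmostInvariantVectors.conjRep {π : G →* (E ≃ₗᵢ[𝕜] E)}
    (hπ : HasAlmostInvariantVectors π) (e : F ≃ₗᵢ[𝕜] E) :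
    HasAlmostInvariantVectors (conjRep e π) := by
  intro S ε hε
  obtain ⟨ξ, hξ, hS⟩ := hπ S ε hε
  refine ⟨e.symm ξ, by simpa using hξ, fun g hg => ?_⟩
  rw [conjRep_apply, e.apply_symm_apply, ← map_sub, LinearIsometryEquiv.norm_map]
  exact hS g hg

theorem small_of_separableSpace (E : Type*) [MetricSpace E] [SeparableSpace E] : Small.{0} E :=
  small_of_injective (kuratowskiEmbedding.isometry E).injective

theorem RelativePropertyT.exists_ne_zero_fixed {H : Subgroup G} (hT : RelativePropertyT H)
    {E : Type*} [NormedAddCommGroup E] [InnerProductSpace ℂ E] [CompleteSpace E]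
    [SeparableSpace E]
    (π : G →* (E ≃ₗᵢ[ℂ] E)) (hπ : HasAlmostInvariantVectors π) :
    ∃ ξ : E, ξ ≠ 0 ∧ ∀ h ∈ H, π h ξ = ξ := by
  have := small_of_separableSpace E
  let _ : InnerProductSpace ℂ (Shrink.{0} E) :=
    InnerProductSpace.induced (Shrink.linearEquiv ℂ E)
  let e : Shrink.{0} E ≃ₗᵢ[ℂ] E := { Shrink.linearEquiv ℂ E with norm_map' := fun _ => rfl }
  have : CompleteSpace (Shrink.{0} E) := e.toIsometryEquiv.completeSpace
  obtain ⟨ξ, hξ, hH⟩ := hT _ (conjRep e π) (hπ.conjRep e)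
  refine ⟨e ξ, by simpa using hξ, fun h hh => ?_⟩
  simpa using congrArg e (hH h hh)

end RelativePropertyT

namespace MeasureTheory

section Koopman

variable {G X 𝕜 E : Type*} [Group G] [MeasurableSpace X] {μ : Measure X} [MulAction G X]
  [MeasurableConstSMul G X] [SMulInvariantMeasure G X μ] [RCLike 𝕜]
  [NormedAddCommGroup E] [NormedSpace 𝕜 E] {p : ENNReal} [Fact (1 ≤ p)]

variable (𝕜) in
def koopman : G →* (Lp E p μ ≃ₗᵢ[𝕜] Lp E p μ) where
  toFun g :=
    { DistribMulAction.toLinearEquiv 𝕜 (Lp E p μ) (DomMulAct.mk g⁻¹) with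
      norm_map' := DomMulAct.norm_smul_Lp _ }
  map_one' := by ext1 f; simp [DistribMulAction.toLinearEquiv]
  map_mul' g h := by ext1 f; simp [DistribMulAction.toLinearEquiv, mul_smul]

theorem koopman_apply (g : G) (f : Lp E p μ) : koopman 𝕜 g f = DomMulAct.mk g⁻¹ • f :=
  rfl

theorem coeFn_koopman (g : G) (f : Lp E p μ) : koopman 𝕜 g f =ᵐ[μ] f ∘ (g⁻¹ • ·) :=
  DomMulAct.smul_Lp_ae_eq _ f

theorem koopman_indicatorConstLp (g : G) {s : Set X} (hs : MeasurableSet s) (hμs : μ s ≠ ⊤)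
    (c : E) :
    koopman 𝕜 g (indicatorConstLp p hs hμs c) =
      indicatorConstLp p (hs.const_smul g) (by rwa [measure_smul]) c := by
  rw [koopman_apply, DomMulAct.mk_smul_indicatorConstLp]
  congr 1
  exact Set.preimage_smul_inv g s

theorem koopman_const [IsFiniteMeasure μ] (g : G) (c : E) :
    koopman 𝕜 g (Lp.const p μ c) = Lp.const p μ c :=
  DomMulAct.smul_Lp_const _ c

end Koopman

section Ergodic

variable {G X : Type*} [MeasurableSpace X] {μ : Measure X}

theorem _root_.ErgodicSMul.ae_eq_const_of_ae_eq_comp_smul [SMul G X] [ErgodicSMul G X μ] {Y : Type*}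
    [TopologicalSpace Y] [MetrizableSpace Y] [Nonempty Y] {f : X → Y}
    (hf : AEStronglyMeasurable f μ) (hinv : ∀ c : G, f ∘ (c • ·) =ᵐ[μ] f) :
    ∃ y, f =ᵐ[μ] Function.const X y := by
  borelize Y
  obtain ⟨t, ht, hft⟩ := hf.isSeparable_ae_range
  have := ht.secondCountableTopology
  refine exists_eventuallyEq_const_of_eventually_mem_of_forall_separating MeasurableSet hft
    fun U hU => ?_
  refine eventuallyConst_set.1 <| aeconst_of_forall_preimage_smul_ae_eq G
    (hf.aemeasurable.nullMeasurable hU) fun c => ?_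
  refine ((hinv c).mono fun x hx => ?_).set_eq
  exact Iff.of_eq (congrArg (· ∈ U) hx)

theorem _root_.ErgodicSMul.of_measure_smul_symmDiff [Group G] [MulAction G X]
    [SMulInvariantMeasure G X μ] [IsProbabilityMeasure μ]
    (h : ∀ s, MeasurableSet s → (∀ g : G, μ ((g • s) ∆ s) = 0) → μ s = 0 ∨ μ s = 1) :
    ErgodicSMul G X μ where
  aeconst_of_forall_preimage_smul_ae_eq {s} hs hinv := by
    refine eventuallyConst_set'.2 ?_
    refine (h s hs fun g => ?_).imp ae_eq_empty.2 fun h1 => ae_eq_univ.2 ?_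
    · rw [measure_symmDiff_eq_zero_iff, ← Set.preimage_smul_inv]
      exact hinv g⁻¹
    · rwa [prob_compl_eq_zero_iff hs]

variable {𝕜 E : Type*} [RCLike 𝕜] [NormedAddCommGroup E] [NormedSpace 𝕜 E] {p : ENNReal}
  [Fact (1 ≤ p)]

theorem Lp.exists_ae_eq_const_of_forall_koopman_eq [Group G] [MulAction G X]
    [MeasurableConstSMul G X] [ErgodicSMul G X μ] {f : Lp E p μ}
    (hf : ∀ g : G, koopman 𝕜 g f = f) : ∃ c, f =ᵐ[μ] Function.const X c := by
  refine ErgodicSMul.ae_eq_const_of_ae_eq_comp_smul (G := G) (Lp.aestronglyMeasurable f)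
    fun c => ?_
  have h := coeFn_koopman (𝕜 := 𝕜) c⁻¹ f
  rw [hf, inv_inv] at h
  exact h.symm

end Ergodic

section MeanZeroIndicator

variable {G X 𝕜 : Type*} [MeasurableSpace X] (μ : Measure X) [IsProbabilityMeasure μ] [RCLike 𝕜]

theorem L2.inner_const_one_left (f : Lp 𝕜 2 μ) :
    ⟪Lp.const 2 μ (1 : 𝕜), f⟫_𝕜 = ∫ x, f x ∂μ := by
  rw [← indicatorConstLp_univ, L2.inner_indicatorConstLp_one, setIntegral_univ]

theorem Lp.eq_zero_of_ae_eq_const_of_inner_const_one {f : Lp 𝕜 2 μ} {c : 𝕜}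
    (hc : f =ᵐ[μ] Function.const X c) (hf : ⟪Lp.const 2 μ (1 : 𝕜), f⟫_𝕜 = 0) : f = 0 := by
  have hc0 : c = 0 := by
    rw [L2.inner_const_one_left, integral_congr_ae hc] at hf
    simpa using hf
  rw [Lp.eq_zero_iff_ae_eq_zero]
  exact hc.trans (by simp [hc0, Function.const_zero])

variable (𝕜) in
def meanZeroIndicator {s : Set X} (hs : MeasurableSet s) : Lp 𝕜 2 μ :=
  indicatorConstLp 2 hs (measure_ne_top μ s) 1 - (μ.real s : 𝕜) • Lp.const 2 μ 1

variable {μ} {s : Set X} (hs : MeasurableSet s)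

theorem inner_const_one_meanZeroIndicator :
    ⟪Lp.const 2 μ (1 : 𝕜), meanZeroIndicator 𝕜 μ hs⟫_𝕜 = 0 := by
  rw [meanZeroIndicator, inner_sub_right, inner_smul_right, ← indicatorConstLp_univ,
    L2.inner_indicatorConstLp_indicatorConstLp, L2.inner_indicatorConstLp_indicatorConstLp]
  simp [RCLike.real_smul_eq_coe_mul]

theorem norm_sq_meanZeroIndicator :
    ‖meanZeroIndicator 𝕜 μ hs‖ ^ 2 = μ.real s * (1 - μ.real s) := by
  rw [← RCLike.ofReal_inj (K := 𝕜), RCLike.ofReal_pow, ← inner_self_eq_norm_sq_to_K,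
    meanZeroIndicator, ← indicatorConstLp_univ]
  simp only [inner_sub_left, inner_sub_right, inner_smul_left, inner_smul_right,
    L2.inner_indicatorConstLp_indicatorConstLp]
  simp [RCLike.real_smul_eq_coe_mul]
  ring

omit hs in
theorem tendsto_measure_mul_one_sub_of_tendsto_norm_meanZeroIndicator {A : ℕ → Set X}
    (hA : ∀ n, MeasurableSet (A n))
    (h : Tendsto (fun n => ‖meanZeroIndicator 𝕜 μ (hA n)‖) atTop (𝓝 0)) :
    Tendsto (fun n => μ (A n) * (1 - μ (A n))) atTop (𝓝 0) := by
  have hsq n : ‖meanZeroIndicator 𝕜 μ (hA n)‖ ^ 2 = (μ (A n) * (1 - μ (A n))).toReal := by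
    rw [norm_sq_meanZeroIndicator, ENNReal.toReal_mul, ENNReal.toReal_sub_of_le prob_le_one
      ENNReal.one_ne_top, ENNReal.toReal_one, Measure.real]
  rw [← ENNReal.tendsto_toReal_iff (fun n => by finiteness) ENNReal.zero_ne_top]
  simpa [hsq] using h.pow 2

variable [Group G] [MulAction G X] [MeasurableConstSMul G X] [SMulInvariantMeasure G X μ]

omit [IsProbabilityMeasure μ] [MeasurableConstSMul G X] in
theorem measureReal_smul_set (g : G) (s : Set X) : μ.real (g • s) = μ.real s := by
  simp [Measure.real, measure_smul]

theorem koopman_meanZeroIndicator (g : G) :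
    koopman 𝕜 g (meanZeroIndicator 𝕜 μ hs) = meanZeroIndicator 𝕜 μ (hs.const_smul g) := by
  rw [meanZeroIndicator, meanZeroIndicator, map_sub, map_smul, koopman_indicatorConstLp,
    koopman_const, measureReal_smul_set]

theorem norm_sq_koopman_meanZeroIndicator_sub (g : G) :
    ‖koopman 𝕜 g (meanZeroIndicator 𝕜 μ hs) - meanZeroIndicator 𝕜 μ hs‖ ^ 2 =
      μ.real ((g • s) ∆ s) := by
  rw [koopman_meanZeroIndicator, meanZeroIndicator, meanZeroIndicator, measureReal_smul_set,
    sub_sub_sub_cancel_right, ← dist_eq_norm, dist_indicatorConstLp_eq_norm,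
    norm_indicatorConstLp two_ne_zero ENNReal.ofNat_ne_top, norm_one, one_mul,
    ENNReal.toReal_ofNat, ← Real.sqrt_eq_rpow, Real.sq_sqrt measureReal_nonneg]

theorem tendsto_norm_koopman_meanZeroIndicator_sub {A : ℕ → Set X}
    (hA : ∀ n, MeasurableSet (A n)) (g : G)
    (h : Tendsto (fun n => μ ((g • A n) ∆ A n)) atTop (𝓝 0)) :
    Tendsto (fun n => ‖koopman 𝕜 g (meanZeroIndicator 𝕜 μ (hA n)) -
      meanZeroIndicator 𝕜 μ (hA n)‖) atTop (𝓝 0) := by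
  have hsq n : ‖koopman 𝕜 g (meanZeroIndicator 𝕜 μ (hA n)) - meanZeroIndicator 𝕜 μ (hA n)‖ =
      √(μ.real ((g • A n) ∆ A n)) := by
    rw [← norm_sq_koopman_meanZeroIndicator_sub (𝕜 := 𝕜), Real.sqrt_sq (norm_nonneg _)]
  simpa [hsq, Measure.real] using ((ENNReal.tendsto_toReal ENNReal.zero_ne_top).comp h).sqrt

end MeanZeroIndicator

end MeasureTheory

end

theorem stmt3_general {G : Type*} [Group G] [Countable G] (H : Subgroup G)
    (relT : ∀ (𝓗 : Type) [NormedAddCommGroup 𝓗] [InnerProductSpace ℂ 𝓗] [CompleteSpace 𝓗]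
      (π : G →* (𝓗 ≃ₗᵢ[ℂ] 𝓗)),
      (∀ (F : Finset G) (ε : ℝ), 0 < ε → ∃ ξ : 𝓗, ‖ξ‖ = 1 ∧ ∀ g ∈ F, ‖π g ξ - ξ‖ ≤ ε) →
      ∃ ξ₀ : 𝓗, ξ₀ ≠ 0 ∧ ∀ h ∈ H, π h ξ₀ = ξ₀)
    {X : Type*} [MeasurableSpace X] (μ : Measure X) [IsProbabilityMeasure μ]
    [MulAction G X]
    (hmp : ∀ g : G, MeasurePreserving (fun x : X => g • x) μ μ)
    (herg : ∀ A : Set X, MeasurableSet A → (∀ h ∈ H, μ ((h • A) ∆ A) = 0) →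
      μ A = 0 ∨ μ A = 1)
    (A : ℕ → Set X) (hA : ∀ n, MeasurableSet (A n))
    (hAai : ∀ g : G, Tendsto (fun n => μ ((g • A n) ∆ A n)) atTop (nhds 0)) :
    Tendsto (fun n => μ (A n) * (1 - μ (A n))) atTop (nhds 0) := by
  have : MeasurableConstSMul G X := ⟨fun g => (hmp g).measurable⟩
  have : SMulInvariantMeasure G X μ :=
    ⟨fun g _ hs => (hmp g).measure_preimage hs.nullMeasurableSet⟩
  have : ErgodicSMul H X μ :=
    .of_measure_smul_symmDiff fun s hs hinv => herg s hs fun h hh => hinv ⟨h, hh⟩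
  let v n := meanZeroIndicator ℂ μ (hA n)
  let V := invariantSpan (koopman ℂ (G := G)) v
  let π := restrictRep (koopman ℂ) V (map_mem_invariantSpan _ v)
  by_contra hnot
  have hπ : HasAlmostInvariantVectors π :=
    hasAlmostInvariantVectors_of_not_tendsto_norm π (fun n => ⟨v n, mem_invariantSpan _ v n⟩)
      (fun g => tendsto_norm_koopman_meanZeroIndicator_sub hA g (hAai g))
      fun h => hnot (tendsto_measure_mul_one_sub_of_tendsto_norm_meanZeroIndicator hA h)
  obtain ⟨ξ, hξ, hH⟩ := RelativePropertyT.exists_ne_zero_fixed relT π hπ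
  obtain ⟨c, hc⟩ := Lp.exists_ae_eq_const_of_forall_koopman_eq (G := H) (𝕜 := ℂ)
    (f := (ξ : Lp ℂ 2 μ)) fun h => congrArg Subtype.val (hH h h.2)
  have hV : V ≤ (ℂ ∙ Lp.const 2 μ (1 : ℂ))ᗮ := by
    refine invariantSpan_le _ v (Submodule.isClosed_orthogonal _) fun g n => ?_
    rw [koopman_meanZeroIndicator, Submodule.mem_orthogonal_singleton_iff_inner_right]
    exact inner_const_one_meanZeroIndicator _
  refine hξ (Subtype.ext (Lp.eq_zero_of_ae_eq_const_of_inner_const_one μ hc ?_))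
  exact (Submodule.mem_orthogonal_singleton_iff_inner_right).1 (hV ξ.2)

/-- If `(G,H)` has the relative property (T) with `H` infinite, and `σ` is a free
measure-preserving action of `G` on a probability space whose restriction to `H` is ergodic,
then `σ` is strongly ergodic. -/
theorem stmt3 {G : Type*} [Group G] [Countable G] (H : Subgroup G) [Infinite H]
    (relT : ∀ (𝓗 : Type) [NormedAddCommGroup 𝓗] [InnerProductSpace ℂ 𝓗] [CompleteSpace 𝓗]
      (π : G →* (𝓗 ≃ₗᵢ[ℂ] 𝓗)),
      (∀ (F : Finset G) (ε : ℝ), 0 < ε → ∃ ξ : 𝓗, ‖ξ‖ = 1 ∧ ∀ g ∈ F, ‖π g ξ - ξ‖ ≤ ε) →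
      ∃ ξ₀ : 𝓗, ξ₀ ≠ 0 ∧ ∀ h ∈ H, π h ξ₀ = ξ₀)
    {X : Type*} [MeasurableSpace X] (μ : Measure X) [IsProbabilityMeasure μ]
    [MulAction G X]
    (hmp : ∀ g : G, MeasurePreserving (fun x : X => g • x) μ μ)
    (hfree : ∀ g : G, g ≠ 1 → μ {x : X | g • x = x} = 0)
    (herg : ∀ A : Set X, MeasurableSet A → (∀ h ∈ H, μ ((h • A) ∆ A) = 0) →
      μ A = 0 ∨ μ A = 1)
    (A : ℕ → Set X) (hA : ∀ n, MeasurableSet (A n))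
    (hAai : ∀ g : G, Tendsto (fun n => μ ((g • A n) ∆ A n)) atTop (nhds 0)) :
    Tendsto (fun n => μ (A n) * (1 - μ (A n))) atTop (nhds 0) :=
  stmt3_general H relT μ hmp herg A hA hAai
end

section
/- Let G be a countable group and H ≤ G an infinite subgroup such that the pair (G,H) has the relative property (T), meaning: for every complex Hilbert space 𝓗 and every unitary representation π of G on 𝓗, if for every finite subset F ⊆ G and every ε > 0 there exists a unit vector ξ with ‖π(g)ξ − ξ‖ ≤ ε for all g ∈ F, then there exists a nonzero vector ξ₀ with π(h)ξ₀ = ξ₀ for all h ∈ H. Then the range of the restriction homomorphism Char(G) → Char(H), γ ↦ γ|_H, is finite; equivalently, the subgroup {γ ∈ Char(G) | γ(h) = 1 for all h ∈ H} has finite index in Char(G). -/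
/-!
If the restrictions to `H` of the characters of `G` formed an infinite set, then, since the values
of characters on a finite set `F` lie in the compact space `F → Circle`, for every `F` and `ε > 0`
there would be two characters with distinct restrictions to `H` that are `ε`-close on `F`; their
quotient is a character that is `ε`-close to `1` on `F` but nontrivial on `H`. As `G` is countable,
countably many such characters `χᵢ` suffice for all pairs `(F, ε)`. The diagonal representation
`ξ ↦ (χᵢ(g) ξᵢ)ᵢ` on `ℓ²` then has almost invariant vectors (basis vectors), yet no nonzero
`H`-invariant vector, because every coordinate is multiplied by a character nontrivial on `H`.
-/

open scoped ENNReal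

namespace lp

variable {α : Type*} {E : α → Type*} [∀ i, NormedAddCommGroup (E i)] {p : ℝ≥0∞}

theorem norm_eq_of_forall_norm_eq {f g : lp E p} (h : ∀ i, ‖f i‖ = ‖g i‖) : ‖f‖ = ‖g‖ := by
  rcases p.trichotomy with rfl | rfl | hp
  · simp only [lp.norm_eq_card_dsupport]
    congr 2
    ext i
    simp only [Set.Finite.mem_toFinset]
    exact not_congr <| by rw [← norm_eq_zero, h, norm_eq_zero]
  · simp only [lp.norm_eq_ciSup, h]
  · simp only [lp.norm_eq_tsum_rpow hp, h]

variable {ι : Type*}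

theorem memℓp_circle_mul (c : ι → Circle) (f : lp (fun _ : ι => ℂ) p) :
    Memℓp (fun i => (c i : ℂ) * f i) p :=
  memℓp_norm_iff.mp <| by simpa only [norm_mul, Circle.norm_coe, one_mul] using (lp.memℓp f).norm

variable [Fact (1 ≤ p)]

noncomputable def circleMul (c : ι → Circle) :
    lp (fun _ : ι => ℂ) p ≃ₗᵢ[ℂ] lp (fun _ : ι => ℂ) p where
  toFun f := ⟨_, memℓp_circle_mul c f⟩
  invFun f := ⟨_, memℓp_circle_mul c⁻¹ f⟩
  map_add' f g := by ext i; exact mul_add _ _ _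
  map_smul' a f := by ext i; exact mul_left_comm _ _ _
  left_inv f := by ext i; simp
  right_inv f := by ext i; simp
  norm_map' f := norm_eq_of_forall_norm_eq fun i => by simp [Circle.norm_coe]

@[simp]
theorem circleMul_apply (c : ι → Circle) (f : lp (fun _ : ι => ℂ) p) (i : ι) :
    circleMul c f i = c i * f i := rfl

noncomputable def circleMulHom :
    (ι → Circle) →* (lp (fun _ : ι => ℂ) p ≃ₗᵢ[ℂ] lp (fun _ : ι => ℂ) p) where
  toFun := circleMul
  map_one' := by ext f i; simp
  map_mul' c d := by ext f i; simp [mul_assoc]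

theorem circleMul_single [DecidableEq ι] (c : ι → Circle) (i : ι) (z : ℂ) :
    circleMul c (lp.single p i z) = lp.single p i (c i * z) := by
  ext j
  rcases eq_or_ne j i with rfl | hj
  · simp
  · simp [Pi.single_eq_of_ne hj]

end lp

section DiagonalRepresentation

variable {G ι : Type*} [Group G]

noncomputable def diagonalRep (χ : ι → G →* Circle) :
    G →* (lp (fun _ : ι => ℂ) 2 ≃ₗᵢ[ℂ] lp (fun _ : ι => ℂ) 2) :=
  lp.circleMulHom.comp (MonoidHom.pi χ)

@[simp]
theorem diagonalRep_apply_apply (χ : ι → G →* Circle) (g : G) (f : lp (fun _ : ι => ℂ) 2)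
    (i : ι) : diagonalRep χ g f i = χ i g * f i := rfl

theorem norm_diagonalRep_single_sub [DecidableEq ι] (χ : ι → G →* Circle) (g : G) (i : ι) :
    ‖diagonalRep χ g (lp.single 2 i 1) - lp.single 2 i 1‖ = ‖(χ i g : ℂ) - 1‖ := by
  rw [show diagonalRep χ g = lp.circleMul (fun i => χ i g) from rfl, lp.circleMul_single, mul_one,
    ← lp.single_sub, lp.norm_single (p := 2) (by norm_num)]

theorem exists_almost_invariant_diagonalRep {χ : ι → G →* Circle}
    (hχ : ∀ (F : Finset G) (ε : ℝ), 0 < ε → ∃ i, ∀ g ∈ F, ‖(χ i g : ℂ) - 1‖ ≤ ε)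
    (F : Finset G) (ε : ℝ) (hε : 0 < ε) :
    ∃ ξ : lp (fun _ : ι => ℂ) 2, ‖ξ‖ = 1 ∧ ∀ g ∈ F, ‖diagonalRep χ g ξ - ξ‖ ≤ ε := by
  classical
  obtain ⟨i, hi⟩ := hχ F ε hε
  refine ⟨lp.single 2 i 1, by simp [lp.norm_single (p := 2) (by norm_num)], fun g hg => ?_⟩
  rw [norm_diagonalRep_single_sub]
  exact hi g hg

theorem eq_zero_of_forall_diagonalRep_eq {χ : ι → G →* Circle} {S : Set G}
    (hχ : ∀ i, ∃ h ∈ S, χ i h ≠ 1) {ξ : lp (fun _ : ι => ℂ) 2}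
    (hξ : ∀ h ∈ S, diagonalRep χ h ξ = ξ) : ξ = 0 := by
  ext i
  obtain ⟨h, hS, hne⟩ := hχ i
  have hfix : (χ i h : ℂ) * ξ i = 1 * ξ i := by
    rw [one_mul, ← diagonalRep_apply_apply, hξ h hS]
  by_contra hξi
  exact hne (Circle.coe_injective (mul_right_cancel₀ hξi hfix))

end DiagonalRepresentation

theorem exists_ne_dist_lt_of_infinite_range {α β X : Type*} [PseudoMetricSpace X]
    [CompactSpace X] (f : α → X) {r : α → β} (hr : (Set.range r).Infinite) {ε : ℝ} (hε : 0 < ε) :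
    ∃ a a', r a ≠ r a' ∧ dist (f a) (f a') < ε := by
  by_contra! hclose
  obtain ⟨t, -, ht, hcover⟩ := finite_cover_balls_of_compact (isCompact_univ (X := X)) (half_pos hε)
  have hfiber : ∀ y, (r '' (f ⁻¹' Metric.ball y (ε / 2))).Subsingleton := by
    rintro y _ ⟨a, ha, rfl⟩ _ ⟨a', ha', rfl⟩
    by_contra hne
    linarith [hclose a a' hne, dist_triangle_right (f a) (f a') y, Metric.mem_ball.mp ha,
      Metric.mem_ball.mp ha']
  refine hr ((ht.biUnion fun y _ => (hfiber y).finite).subset ?_)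
  rintro _ ⟨a, rfl⟩
  obtain ⟨y, hy, hay⟩ := Set.mem_iUnion₂.mp (hcover (Set.mem_univ (f a)))
  exact Set.mem_biUnion hy ⟨a, hay, rfl⟩

theorem exists_char_ne_one_on_near_one {G : Type*} [Group G] (H : Subgroup G)
    (hH : (Set.range fun γ : G →* Circle => γ.comp H.subtype).Infinite) (F : Finset G) {ε : ℝ}
    (hε : 0 < ε) : ∃ χ : G →* Circle, (∃ h ∈ H, χ h ≠ 1) ∧ ∀ g ∈ F, ‖(χ g : ℂ) - 1‖ < ε := by
  obtain ⟨γ, γ', hne, hdist⟩ :=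
    exists_ne_dist_lt_of_infinite_range (fun (γ : G →* Circle) (g : F) => γ g) hH hε
  refine ⟨γ / γ', ?_, fun g hg => ?_⟩
  · contrapose! hne
    refine MonoidHom.ext fun ⟨h, hh⟩ => ?_
    simpa [div_eq_one] using hne h hh
  calc ‖((γ / γ') g : ℂ) - 1‖ = dist (γ g) (γ' g) := by
        rw [MonoidHom.div_apply, Circle.coe_div, div_sub_one (Circle.coe_ne_zero _), norm_div,
          Circle.norm_coe, div_one]
        exact (dist_eq_norm (γ g : ℂ) _).symm
    _ < ε := (dist_le_pi_dist _ _ ⟨g, hg⟩).trans_lt hdist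

theorem stmt4_general {G : Type*} [Group G] [Countable G] (H : Subgroup G)
    (relT : ∀ (𝓗 : Type) [NormedAddCommGroup 𝓗] [InnerProductSpace ℂ 𝓗] [CompleteSpace 𝓗]
      (π : G →* (𝓗 ≃ₗᵢ[ℂ] 𝓗)),
      (∀ (F : Finset G) (ε : ℝ), 0 < ε → ∃ ξ : 𝓗, ‖ξ‖ = 1 ∧ ∀ g ∈ F, ‖π g ξ - ξ‖ ≤ ε) →
      ∃ ξ₀ : 𝓗, ξ₀ ≠ 0 ∧ ∀ h ∈ H, π h ξ₀ = ξ₀) :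
    (Set.range fun γ : G →* Circle => γ.comp H.subtype).Finite := by
  by_contra hH
  obtain ⟨e, he⟩ := exists_surjective_nat (Finset G)
  choose χ hχH hχF using fun p : ℕ × ℕ =>
    exists_char_ne_one_on_near_one H hH (e p.1) (Nat.one_div_pos_of_nat (n := p.2))
  obtain ⟨ξ₀, hξ₀, hfix⟩ := relT _ (diagonalRep χ) <| exists_almost_invariant_diagonalRep
    fun F ε hε => by
      obtain ⟨m, rfl⟩ := he F
      obtain ⟨n, hn⟩ := exists_nat_one_div_lt hε
      exact ⟨(m, n), fun g hg => (hχF (m, n) g hg).le.trans hn.le⟩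
  exact hξ₀ (eq_zero_of_forall_diagonalRep_eq hχH hfix)

/-- If `(G,H)` has the relative property (T) with `H` infinite, then the range of the
restriction homomorphism `Char(G) → Char(H)` is finite. -/
theorem stmt4 {G : Type*} [Group G] [Countable G] (H : Subgroup G) [Infinite H]
    (relT : ∀ (𝓗 : Type) [NormedAddCommGroup 𝓗] [InnerProductSpace ℂ 𝓗] [CompleteSpace 𝓗]
      (π : G →* (𝓗 ≃ₗᵢ[ℂ] 𝓗)),
      (∀ (F : Finset G) (ε : ℝ), 0 < ε → ∃ ξ : 𝓗, ‖ξ‖ = 1 ∧ ∀ g ∈ F, ‖π g ξ - ξ‖ ≤ ε) →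
      ∃ ξ₀ : 𝓗, ξ₀ ≠ 0 ∧ ∀ h ∈ H, π h ξ₀ = ξ₀) :
    (Set.range fun γ : G →* Circle => γ.comp H.subtype).Finite :=
  stmt4_general H relT
end

section
/- Let σ be a weakly mixing measure-preserving action of a countable group G on a probability space (X,μ), i.e. the diagonal action of G on (X × X, μ ⊗ μ) is ergodic. Let γ₁, γ₂ ∈ Char(G) and suppose the constant cocycles they define are cohomologous: there exists a measurable u : X → circle such that for every g ∈ G, γ₁(g) = (u(x))⁻¹ · γ₂(g) · u(g⁻¹ • x) for μ-almost every x. Then γ₁ = γ₂. (In other words, the natural homomorphism from Char(G) into the first cohomology group H¹(σ,G) of the action is injective.) -/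
/-!
Put `c g = γ₁ g / γ₂ g`. The cohomology relation says that `u` is an eigenfunction,
`u (g⁻¹ • x) = c g * u x`, so `(x, y) ↦ u x / u y` is invariant under the diagonal action and
hence a.e. constant by weak mixing. Thus `u` is a.e. constant, and as `g` preserves `μ`,
`c g = 1`.
-/

open MeasureTheory Filter Pointwise
open scoped symmDiff

noncomputable instance : MeasurableSpace Circle := borel Circle
instance : BorelSpace Circle := ⟨rfl⟩

open Function

namespace MeasureTheory

variable {G α : Type*} [MeasurableSpace α] {μ : Measure α}

theorem exists_ae_eq_const_of_forall_comp_smul_ae_eq [SMul G α] [ErgodicSMul G α μ]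
    {M : Type*} [Nonempty M] [MeasurableSpace M] [MeasurableSpace.CountablySeparated M]
    {f : α → M} (hf : Measurable f) (hinv : ∀ g : G, (fun x ↦ f (g • x)) =ᵐ[μ] f) :
    ∃ c, f =ᵐ[μ] const α c :=
  exists_eventuallyEq_const_of_forall_separating MeasurableSet fun U hU ↦
    eventuallyConst_set.1 <| aeconst_of_forall_preimage_smul_ae_eq G (hf hU).nullMeasurableSet
      fun g ↦ (hinv g).mono fun _ hx ↦ congrArg (· ∈ U) hx

theorem ergodicSMul_of_measure_smul_symmDiff [Group G] [MulAction G α] [IsProbabilityMeasure μ]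
    [SMulInvariantMeasure G α μ]
    (h : ∀ s : Set α, MeasurableSet s → (∀ g : G, μ ((g • s) ∆ s) = 0) → μ s = 0 ∨ μ s = 1) :
    ErgodicSMul G α μ where
  aeconst_of_forall_preimage_smul_ae_eq {s} hs hinv := by
    have hsmul : ∀ g : G, μ ((g • s) ∆ s) = 0 := fun g ↦ by
      rw [← Set.preimage_smul_inv, measure_symmDiff_eq_zero_iff]
      exact hinv g⁻¹
    rw [eventuallyConst_set']
    rcases h s hs hsmul with h0 | h1
    · exact Or.inl (ae_eq_empty.2 h0)
    · exact Or.inr (ae_eq_univ.2 (by rw [prob_compl_eq_zero_iff hs]; exact h1))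

theorem exists_ae_eq_const_of_div_ae_eq_const [SFinite μ] [NeZero μ] {M : Type*} [Group M]
    {u : α → M} {k : M} (h : (fun p : α × α ↦ u p.1 / u p.2) =ᵐ[μ.prod μ] const _ k) :
    ∃ a, u =ᵐ[μ] const α a := by
  obtain ⟨x₀, hx₀⟩ := (Measure.ae_ae_of_ae_prod h).exists
  refine ⟨k⁻¹ * u x₀, hx₀.mono fun y hy ↦ ?_⟩
  simp only [const_apply] at hy ⊢
  rw [← hy, inv_div, div_mul_cancel]

theorem eq_one_of_ae_inv_smul_eq_mul [Group G] [MulAction G α] [SFinite μ] [NeZero μ]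
    [SMulInvariantMeasure G α μ] [ErgodicSMul G (α × α) (μ.prod μ)]
    {M : Type*} [CommGroup M] [MeasurableSpace M] [MeasurableMul₂ M] [MeasurableInv M]
    [MeasurableSpace.CountablySeparated M]
    {u : α → M} (hu : Measurable u) {c : G → M} (hc : ∀ g, ∀ᵐ x ∂μ, u (g⁻¹ • x) = c g * u x)
    (g : G) : c g = 1 := by
  have hinv : ∀ h : G, (fun p : α × α ↦ u (h • p).1 / u (h • p).2) =ᵐ[μ.prod μ]
      fun p ↦ u p.1 / u p.2 := fun h ↦ by
    have hc' : ∀ᵐ x ∂μ, u (h • x) = c h⁻¹ * u x := by simpa only [inv_inv] using hc h⁻¹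
    filter_upwards [Measure.quasiMeasurePreserving_fst.ae hc',
      Measure.quasiMeasurePreserving_snd.ae hc'] with p h₁ h₂
    rw [Prod.smul_fst, Prod.smul_snd, h₁, h₂, mul_div_mul_left_eq_div]
  obtain ⟨k, hk⟩ := exists_ae_eq_const_of_forall_comp_smul_ae_eq
    ((hu.comp measurable_fst).div (hu.comp measurable_snd)) hinv
  obtain ⟨a, ha⟩ := exists_ae_eq_const_of_div_ae_eq_const hk
  have hshift : ∀ᵐ x ∂μ, u (g⁻¹ • x) = a := tendsto_smul_ae μ g⁻¹ ha
  obtain ⟨x, hx₁, hx₂, hx₃⟩ := (hshift.and ((hc g).and ha)).exists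
  simp only [const_apply] at hx₃
  rwa [hx₂, hx₃, mul_eq_right] at hx₁

end MeasureTheory

theorem stmt6_general {G X : Type*} [Group G] [MeasurableSpace X]
    (μ : Measure X) [IsProbabilityMeasure μ] [MulAction G X]
    (hmp : ∀ g : G, MeasurePreserving (fun x : X => g • x) μ μ)
    (hwmix : ∀ A : Set (X × X), MeasurableSet A →
      (∀ g : G, (μ.prod μ) (((fun p : X × X => (g • p.1, g • p.2)) '' A) ∆ A) = 0) →
      (μ.prod μ) A = 0 ∨ (μ.prod μ) A = 1)
    (γ₁ γ₂ : G →* Circle) (u : X → Circle) (hu : Measurable u)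
    (hcoh : ∀ g : G, ∀ᵐ x ∂μ, γ₁ g = (u x)⁻¹ * γ₂ g * u (g⁻¹ • x)) :
    γ₁ = γ₂ := by
  have : SMulInvariantMeasure G X μ :=
    ⟨fun g _ hs ↦ (hmp g).measure_preimage hs.nullMeasurableSet⟩
  have : SMulInvariantMeasure G (X × X) (μ.prod μ) :=
    ⟨fun g _ hs ↦ ((hmp g).prod (hmp g)).measure_preimage hs.nullMeasurableSet⟩
  -- `g • A` for `A : Set (X × X)` unfolds to the image under the diagonal map in `hwmix`.
  have : ErgodicSMul G (X × X) (μ.prod μ) := ergodicSMul_of_measure_smul_symmDiff hwmix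
  have heigen : ∀ g, ∀ᵐ x ∂μ, u (g⁻¹ • x) = γ₁ g / γ₂ g * u x := fun g ↦
    (hcoh g).mono fun x hx ↦ by
      rw [hx, mul_div_right_comm, mul_div_assoc, div_self', mul_one, inv_mul_cancel_comm]
  exact MonoidHom.ext fun g ↦ div_eq_one.mp (eq_one_of_ae_inv_smul_eq_mul hu heigen g)

/-- For a weakly mixing measure-preserving action `σ` of a countable group `G`, if the
constant cocycles given by two characters `γ₁, γ₂ ∈ Char(G)` are cohomologous, then
`γ₁ = γ₂`; i.e. the natural map `Char(G) → H¹(σ,G)` is injective. -/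
theorem stmt6 {G X : Type*} [Group G] [Countable G] [MeasurableSpace X]
    (μ : Measure X) [IsProbabilityMeasure μ] [MulAction G X]
    (hmp : ∀ g : G, MeasurePreserving (fun x : X => g • x) μ μ)
    (hwmix : ∀ A : Set (X × X), MeasurableSet A →
      (∀ g : G, (μ.prod μ) (((fun p : X × X => (g • p.1, g • p.2)) '' A) ∆ A) = 0) →
      (μ.prod μ) A = 0 ∨ (μ.prod μ) A = 1)
    (γ₁ γ₂ : G →* Circle) (u : X → Circle) (hu : Measurable u)
    (hcoh : ∀ g : G, ∀ᵐ x ∂μ, γ₁ g = (u x)⁻¹ * γ₂ g * u (g⁻¹ • x)) :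
    γ₁ = γ₂ :=
  stmt6_general μ hmp hwmix γ₁ γ₂ u hu hcoh
end

section
/- Let G be a countable group, H a normal infinite subgroup of G, and σ a free measure-preserving action of G on a probability space (X,μ) such that the restriction of σ to H is weakly mixing (the diagonal action of H on (X × X, μ ⊗ μ) is ergodic). Let w be a 1-cocycle for σ and suppose that for every h ∈ H the function w(h) is μ-almost everywhere equal to a constant. Then for every g ∈ G the function w(g) is μ-almost everywhere equal to a constant; that is, w coincides almost everywhere with a character of G. -/
open MeasureTheory Filter Pointwise
open scoped symmDiff

/-- A probability measure with the zero-one law for preimages of a measurable map into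
`Circle` forces the map to be a.e. constant. -/
lemma aux_ae_const {Ω : Type*} [MeasurableSpace Ω] (m : Measure Ω) [IsProbabilityMeasure m]
    (F : Ω → Circle) (hF : Measurable F)
    (h01 : ∀ S : Set Circle, MeasurableSet S → m (F ⁻¹' S) = 0 ∨ m (F ⁻¹' S) = 1) :
    ∃ c : Circle, F =ᵐ[m] fun _ => c := by
  obtain ⟨b, hbc, -, hbasis⟩ := TopologicalSpace.exists_countable_basis Circle
  set ν : Measure Circle := m.map F with hνdef
  have hνap : ∀ S : Set Circle, MeasurableSet S → ν S = m (F ⁻¹' S) := fun S hS =>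
    Measure.map_apply hF hS
  have hνprob : IsProbabilityMeasure ν := Measure.isProbabilityMeasure_map hF.aemeasurable
  set T : Set (Set Circle) := {U ∈ b | ν U = 1} with hTdef
  have hTc : T.Countable := hbc.mono (Set.sep_subset _ _)
  have hcompl : ν (⋃ U ∈ T, Uᶜ) = 0 := by
    rw [measure_biUnion_null_iff hTc]
    intro U hU
    have hUo : MeasurableSet U := (hbasis.isOpen hU.1).measurableSet
    exact (prob_compl_eq_zero_iff hUo).mpr hU.2
  have hne : (⋃ U ∈ T, Uᶜ)ᶜ.Nonempty := by
    refine nonempty_of_measure_ne_zero (μ := ν) fun h0 => ?_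
    have h2 := measure_union_le (μ := ν) (⋃ U ∈ T, Uᶜ) (⋃ U ∈ T, Uᶜ)ᶜ
    rw [Set.union_compl_self, hcompl, h0, measure_univ] at h2
    simp at h2
  obtain ⟨c, hc⟩ := hne
  have hcmem : ∀ U ∈ T, c ∈ U := by
    intro U hU
    by_contra h
    exact hc (Set.mem_biUnion hU h)
  refine ⟨c, ?_⟩
  have hnull : ν {c}ᶜ = 0 := by
    obtain ⟨S, hSb, hSeq⟩ := hbasis.open_eq_sUnion (isOpen_compl_singleton (x := c))
    rw [hSeq, Set.sUnion_eq_biUnion, measure_biUnion_null_iff (hbc.mono hSb)]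
    intro U hU
    have hUo : MeasurableSet U := (hbasis.isOpen (hSb hU)).measurableSet
    rcases h01 U hUo with h0 | h1
    · rw [hνap U hUo]; exact h0
    · exfalso
      have hUT : U ∈ T := ⟨hSb hU, by rw [hνap U hUo]; exact h1⟩
      have hcU : c ∈ U := hcmem U hUT
      have : c ∈ ⋃₀ S := Set.mem_sUnion.mpr ⟨U, hU, hcU⟩
      rw [← hSeq] at this
      exact this rfl
  have hmnull : m (F ⁻¹' {c}ᶜ) = 0 := by
    rw [← hνap _ (measurableSet_singleton c).compl]; exact hnull
  exact measure_mono_null (fun x hx => hx) hmnull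

/-- If `H` is an infinite normal subgroup of `G`, `σ` is a free measure-preserving action of
`G` whose restriction to `H` is weakly mixing, and `w` is a 1-cocycle for `σ` which is a.e.
constant on `H`, then `w` is a.e. constant on all of `G`, i.e. `w` coincides a.e. with a
character of `G`. -/
theorem stmt7 {G X : Type*} [Group G] [Countable G] (H : Subgroup G) [H.Normal] [Infinite H]
    [MeasurableSpace X] (μ : Measure X) [IsProbabilityMeasure μ] [MulAction G X]
    (hmp : ∀ g : G, MeasurePreserving (fun x : X => g • x) μ μ)
    (hfree : ∀ g : G, g ≠ 1 → μ {x : X | g • x = x} = 0)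
    (hwmixH : ∀ A : Set (X × X), MeasurableSet A →
      (∀ h ∈ H, (μ.prod μ) (((fun p : X × X => (h • p.1, h • p.2)) '' A) ∆ A) = 0) →
      (μ.prod μ) A = 0 ∨ (μ.prod μ) A = 1)
    (w : G → X → Circle) (hwmeas : ∀ g : G, Measurable (w g))
    (hwcoc : ∀ g h : G, ∀ᵐ x ∂μ, w (g * h) x = w g x * w h (g⁻¹ • x))
    (hconst : ∀ h ∈ H, ∃ z : Circle, w h =ᵐ[μ] fun _ => z) :
    (∀ g : G, ∃ z : Circle, w g =ᵐ[μ] fun _ => z) ∧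
      ∃ γ : G →* Circle, ∀ g : G, w g =ᵐ[μ] fun _ => γ g := by
  classical
  set m : Measure (X × X) := μ.prod μ with hm
  have hfst : MeasurePreserving (Prod.fst : X × X → X) m μ :=
    ⟨measurable_fst, by rw [hm, Measure.map_fst_prod, measure_univ, one_smul]⟩
  have hsnd : MeasurePreserving (Prod.snd : X × X → X) m μ :=
    ⟨measurable_snd, by rw [hm, Measure.map_snd_prod, measure_univ, one_smul]⟩
  have hneae : (ae μ).NeBot := ae_neBot.mpr (IsProbabilityMeasure.ne_zero μ)
  -- Main claim : each `w g` is a.e. constant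
  have main : ∀ g : G, ∃ z : Circle, w g =ᵐ[μ] fun _ => z := by
    intro g
    -- quasi-invariance of `w g` under the action of `H`, up to constants
    have key : ∀ h : G, h ∈ H →
        ∃ u : Circle, (fun x => w g (h • x)) =ᵐ[μ] fun x => u * w g x := by
      intro h hh
      have hh' : g⁻¹ * h * g ∈ H := by
        have := Subgroup.Normal.conj_mem ‹H.Normal› h hh g⁻¹
        simpa using this
      obtain ⟨ch, hch⟩ := hconst h hh
      obtain ⟨ch', hch'⟩ := hconst _ hh'
      have e1 := hwcoc g (g⁻¹ * h * g)
      have e2 := hwcoc h g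
      have hgh : g * (g⁻¹ * h * g) = h * g := by group
      have e3 := (hmp g⁻¹).quasiMeasurePreserving.ae_eq_comp hch'
      have e4 : (fun x => w g (h⁻¹ • x)) =ᵐ[μ] fun x => ch⁻¹ * ch' * w g x := by
        filter_upwards [e1, e2, e3, hch] with x h1 h2 h3 h4
        have h3' : w (g⁻¹ * h * g) (g⁻¹ • x) = ch' := h3
        rw [hgh] at h1
        rw [h1, h3', h4] at h2
        -- h2 : w g x * ch' = ch * w g (h⁻¹ • x)
        have h5 : ch⁻¹ * (w g x * ch') = w g (h⁻¹ • x) := by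
          rw [h2, inv_mul_cancel_left]
        rw [← h5, mul_comm (w g x) ch', mul_assoc]
      have e5 := (hmp h).quasiMeasurePreserving.ae_eq_comp e4
      refine ⟨(ch⁻¹ * ch')⁻¹, ?_⟩
      filter_upwards [e5] with x h5
      have h5' : w g (h⁻¹ • h • x) = ch⁻¹ * ch' * w g (h • x) := h5
      rw [inv_smul_smul] at h5'
      rw [h5', inv_mul_cancel_left]
    -- the function F(x,y) = w g x / w g y on the product space
    set F : X × X → Circle := fun p => w g p.1 * (w g p.2)⁻¹ with hFdef
    have hFmeas : Measurable F :=
      ((hwmeas g).comp measurable_fst).mul ((hwmeas g).comp measurable_snd).inv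
    have hFinv : ∀ h : G, h ∈ H → ∀ᵐ p ∂m, F (h • p.1, h • p.2) = F p := by
      intro h hh
      obtain ⟨u, hu⟩ := key h hh
      have h1 := hfst.quasiMeasurePreserving.ae_eq_comp hu
      have h2 := hsnd.quasiMeasurePreserving.ae_eq_comp hu
      filter_upwards [h1, h2] with p e1 e2
      have e1' : w g (h • p.1) = u * w g p.1 := e1
      have e2' : w g (h • p.2) = u * w g p.2 := e2
      show w g (h • p.1) * (w g (h • p.2))⁻¹ = w g p.1 * (w g p.2)⁻¹
      rw [e1', e2', mul_inv, mul_mul_mul_comm, mul_inv_cancel, one_mul]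
    -- zero-one law for level sets of F
    have h01 : ∀ S : Set Circle, MeasurableSet S → m (F ⁻¹' S) = 0 ∨ m (F ⁻¹' S) = 1 := by
      intro S hS
      refine hwmixH (F ⁻¹' S) (hFmeas hS) ?_
      intro h hh
      have hinv := hFinv h⁻¹ (inv_mem hh)
      have himg : (fun p : X × X => (h • p.1, h • p.2)) '' (F ⁻¹' S)
          = (fun p : X × X => (h⁻¹ • p.1, h⁻¹ • p.2)) ⁻¹' (F ⁻¹' S) := by
        have hli : Function.LeftInverse (fun p : X × X => (h⁻¹ • p.1, h⁻¹ • p.2))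
            (fun p : X × X => (h • p.1, h • p.2)) := fun p => by simp
        have hri : Function.RightInverse (fun p : X × X => (h⁻¹ • p.1, h⁻¹ • p.2))
            (fun p : X × X => (h • p.1, h • p.2)) := fun p => by simp
        exact congrFun (Set.image_eq_preimage_of_inverse hli hri) _
      rw [himg]
      have hz : m {p : X × X | F (h⁻¹ • p.1, h⁻¹ • p.2) ≠ F p} = 0 := ae_iff.mp hinv
      refine measure_mono_null ?_ hz
      intro p hp
      rcases Set.mem_symmDiff.mp hp with ⟨h1, h2⟩ | ⟨h1, h2⟩
      · have h1' : F (h⁻¹ • p.1, h⁻¹ • p.2) ∈ S := h1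
        have h2' : F p ∉ S := h2
        exact fun he => h2' (by rw [← he]; exact h1')
      · have h1' : F p ∈ S := h1
        have h2' : F (h⁻¹ • p.1, h⁻¹ • p.2) ∉ S := fun hx => h2 hx
        exact fun he => h2' (by rw [he]; exact h1')
    obtain ⟨c, hc⟩ := aux_ae_const m F hFmeas h01
    have hc2 : ∀ᵐ x ∂μ, ∀ᵐ y ∂μ, w g x * (w g y)⁻¹ = c := Measure.ae_ae_of_ae_prod hc
    obtain ⟨x₀, hx₀⟩ := hc2.exists
    refine ⟨c⁻¹ * w g x₀, ?_⟩
    filter_upwards [hx₀] with y hy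
    have h6 : c * w g y = w g x₀ := by rw [← hy, inv_mul_cancel_right]
    rw [← h6, inv_mul_cancel_left]
  refine ⟨main, ?_⟩
  choose z hz using main
  have hmul : ∀ a b : G, z (a * b) = z a * z b := by
    intro a b
    have e3 := (hmp a⁻¹).quasiMeasurePreserving.ae_eq_comp (hz b)
    have hae : ∀ᵐ x ∂μ, z (a * b) = z a * z b := by
      filter_upwards [hwcoc a b, hz (a * b), hz a, e3] with x h1 h2 h3 h4
      have h4' : w b (a⁻¹ • x) = z b := h4
      rw [← h2, h1, h3, h4']
    exact hae.exists.choose_spec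
  have hone : z 1 = 1 := by
    have h := hmul 1 1
    rw [one_mul] at h
    exact (left_eq_mul.mp h)
  exact ⟨⟨⟨z, hone⟩, hmul⟩, fun g => hz g⟩
end

section
/- Let β be a measure-preserving action of a countable group Γ on a standard Borel probability space (X,μ). For γ ∈ Char(Γ), call a measurable function f : X → circle a γ-eigenfunction if for every h ∈ Γ, f(h⁻¹ • x) = γ(h) · f(x) for μ-almost every x. Then: (a) if f is a γ-eigenfunction and f' is a γ'-eigenfunction, then the pointwise product f·f' is a (γ·γ')-eigenfunction; (b) the set Char_β(Γ) of all γ ∈ Char(Γ) admitting a γ-eigenfunction is a subgroup of Char(Γ); (c) Char_β(Γ) is countable. -/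
/-!
Eigenfunctions for distinct characters are orthogonal in `L²(μ)`: the integral of `conj f · f'`
is invariant under `h⁻¹`, yet the eigen-equations multiply it by `conj (γ h) · γ' h ≠ 1`. Normalised
eigenfunctions therefore form an orthonormal family indexed by `Char_β(Γ)`; its members are pairwise
`√2` apart, and `L²(μ)` is separable because a standard Borel space is countably generated.
-/

open MeasureTheory Filter

open TopologicalSpace ComplexConjugate

theorem countable_of_pairwise_le_dist {α ι : Type*} [PseudoMetricSpace α] [SeparableSpace α]
    {v : ι → α} {ε : ℝ} (hε : 0 < ε) (hv : Pairwise fun i j => ε ≤ dist (v i) (v j)) :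
    Countable ι :=
  Pairwise.countable_of_isOpen_disjoint (s := fun i => Metric.ball (v i) (ε / 2))
    (fun i j hij => Metric.ball_disjoint_ball (by linarith [hv hij]))
    (fun _ => Metric.isOpen_ball) (fun i => ⟨v i, Metric.mem_ball_self (half_pos hε)⟩)

theorem Orthonormal.countable {𝕜 E ι : Type*} [RCLike 𝕜] [NormedAddCommGroup E]
    [InnerProductSpace 𝕜 E] [SeparableSpace E] {v : ι → E} (hv : Orthonormal 𝕜 v) :
    Countable ι := by
  refine countable_of_pairwise_le_dist (v := v) one_pos fun i j hij => ?_
  have hsq : dist (v i) (v j) ^ 2 = 2 := by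
    rw [dist_eq_norm, @norm_sub_sq 𝕜, hv.1 i, hv.1 j, hv.2 hij]
    norm_num
  nlinarith [dist_nonneg (x := v i) (y := v j)]

theorem MeasureTheory.MeasurePreserving.integral_eq_zero_of_ae_comp_eq_mul {X 𝕜 : Type*}
    [MeasurableSpace X] [RCLike 𝕜] {μ : Measure X} {T : X → X} (hT : MeasurePreserving T μ μ)
    {g : X → 𝕜} (hg : AEStronglyMeasurable g μ) {c : 𝕜} (hc : c ≠ 1)
    (hgT : ∀ᵐ x ∂μ, g (T x) = c * g x) :
    ∫ x, g x ∂μ = 0 := by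
  have hinv : ∫ x, g x ∂μ = c * ∫ x, g x ∂μ := by
    calc ∫ x, g x ∂μ = ∫ x, g (T x) ∂μ := by
          rw [← integral_map hT.aemeasurable (hT.map_eq.symm ▸ hg), hT.map_eq]
      _ = c * ∫ x, g x ∂μ := by rw [integral_congr_ae hgT, integral_const_mul]
  have : (c - 1) * ∫ x, g x ∂μ = 0 := by rw [sub_mul, one_mul, ← hinv, sub_self]
  exact (mul_eq_zero.mp this).resolve_left (sub_ne_zero.mpr hc)

theorem MeasureTheory.MemLp.inner_toLp {X : Type*} [MeasurableSpace X] {μ : Measure X} {f g : X → ℂ}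
    (hf : MemLp f 2 μ) (hg : MemLp g 2 μ) :
    inner ℂ (hf.toLp f) (hg.toLp g) = ∫ x, conj (f x) * g x ∂μ := by
  rw [L2.inner_def]
  refine integral_congr_ae ?_
  filter_upwards [hf.coeFn_toLp, hg.coeFn_toLp] with x hfx hgx
  rw [hfx, hgx, RCLike.inner_apply, mul_comm]

-- `Circle` carries `borel Circle`, not the subtype σ-algebra, hence the detour via continuity.
theorem Circle.measurable_coe : Measurable fun z : Circle => (z : ℂ) :=
  Continuous.measurable (by exact continuous_subtype_val)

theorem Measurable.memLp_coe_circle {X : Type*} [MeasurableSpace X] {μ : Measure X}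
    [IsFiniteMeasure μ] {f : X → Circle} (hf : Measurable f) (p : ENNReal) :
    MemLp (fun x => (f x : ℂ)) p μ :=
  MemLp.of_bound (Circle.measurable_coe.comp hf).aestronglyMeasurable 1
    (ae_of_all _ fun x => (Circle.norm_coe (f x)).le)

theorem Circle.conj_coe_mul_coe (z w : Circle) : conj (z : ℂ) * w = ↑(z⁻¹ * w) := by
  rw [Circle.coe_mul, Circle.coe_inv_eq_conj]

section Eigenfunction

variable {Γ X : Type*} [Group Γ] [MulAction Γ X] [MeasurableSpace X]

def IsEigenfunction (μ : Measure X) (γ : Γ →* Circle) (f : X → Circle) : Prop :=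
  Measurable f ∧ ∀ h : Γ, ∀ᵐ x ∂μ, f (h⁻¹ • x) = γ h * f x

variable {μ : Measure X}

theorem isEigenfunction_one : IsEigenfunction μ (1 : Γ →* Circle) (fun _ => 1) :=
  ⟨measurable_const, fun _ => ae_of_all _ fun _ => by simp⟩

theorem IsEigenfunction.mul {γ γ' : Γ →* Circle} {f f' : X → Circle}
    (hf : IsEigenfunction μ γ f) (hf' : IsEigenfunction μ γ' f') :
    IsEigenfunction μ (γ * γ') (fun x => f x * f' x) := by
  refine ⟨hf.1.mul hf'.1, fun h => ?_⟩
  filter_upwards [hf.2 h, hf'.2 h] with x e e'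
  rw [e, e', MonoidHom.mul_apply, mul_mul_mul_comm]

theorem IsEigenfunction.inv {γ : Γ →* Circle} {f : X → Circle} (hf : IsEigenfunction μ γ f) :
    IsEigenfunction μ γ⁻¹ (fun x => (f x)⁻¹) := by
  refine ⟨hf.1.inv, fun h => ?_⟩
  filter_upwards [hf.2 h] with x e
  rw [e, MonoidHom.inv_apply, mul_inv]

variable (Γ μ) in
def eigencharacters : Subgroup (Γ →* Circle) where
  carrier := {γ | ∃ f, IsEigenfunction μ γ f}
  one_mem' := ⟨_, isEigenfunction_one⟩
  mul_mem' := fun ⟨_, hf⟩ ⟨_, hf'⟩ => ⟨_, hf.mul hf'⟩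
  inv_mem' := fun ⟨_, hf⟩ => ⟨_, hf.inv⟩

theorem IsEigenfunction.integral_conj_mul_eq_zero
    (hmp : ∀ h : Γ, MeasurePreserving (fun x : X => h • x) μ μ) {γ γ' : Γ →* Circle}
    {f f' : X → Circle} (hf : IsEigenfunction μ γ f) (hf' : IsEigenfunction μ γ' f')
    (hne : γ ≠ γ') : ∫ x, conj (f x : ℂ) * f' x ∂μ = 0 := by
  obtain ⟨h, hh⟩ := DFunLike.ne_iff.mp hne
  simp_rw [Circle.conj_coe_mul_coe]
  refine (hmp h⁻¹).integral_eq_zero_of_ae_comp_eq_mul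
    (Circle.measurable_coe.comp (hf.1.inv.mul hf'.1)).aestronglyMeasurable
    (c := ↑((γ h)⁻¹ * γ' h)) ?_ ?_
  · rwa [Ne, Circle.coe_eq_one, inv_mul_eq_one]
  · filter_upwards [hf.2 h, hf'.2 h] with x e e'
    rw [e, e', ← Circle.coe_mul, mul_inv]
    congr 1
    ac_rfl

theorem countable_eigencharacters [StandardBorelSpace X] [IsProbabilityMeasure μ]
    (hmp : ∀ h : Γ, MeasurePreserving (fun x : X => h • x) μ μ) :
    (eigencharacters Γ μ : Set (Γ →* Circle)).Countable := by
  choose f hf using fun γ : eigencharacters Γ μ => γ.2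
  let v : eigencharacters Γ μ → Lp ℂ 2 μ := fun γ => ((hf γ).1.memLp_coe_circle 2).toLp _
  have hv : Orthonormal ℂ v := by
    classical
    rw [orthonormal_iff_ite]
    intro γ γ'
    rw [MemLp.inner_toLp]
    split_ifs with hγ
    · subst hγ
      simp [Circle.conj_coe_mul_coe]
    · exact (hf γ).integral_conj_mul_eq_zero hmp (hf γ') (Subtype.coe_injective.ne hγ)
  have : Fact ((2 : ENNReal) ≠ ⊤) := ⟨ENNReal.ofNat_ne_top⟩
  exact Set.countable_coe_iff.mp hv.countable

end Eigenfunction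

theorem stmt8_general {Γ X : Type*} [Group Γ] [MeasurableSpace X]
    [StandardBorelSpace X] (μ : Measure X) [IsProbabilityMeasure μ] [MulAction Γ X]
    (hmp : ∀ h : Γ, MeasurePreserving (fun x : X => h • x) μ μ) :
    (∀ (γ γ' : Γ →* Circle) (f f' : X → Circle),
      (Measurable f ∧ ∀ h : Γ, ∀ᵐ x ∂μ, f (h⁻¹ • x) = γ h * f x) →
      (Measurable f' ∧ ∀ h : Γ, ∀ᵐ x ∂μ, f' (h⁻¹ • x) = γ' h * f' x) →
      (Measurable (fun x => f x * f' x) ∧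
        ∀ h : Γ, ∀ᵐ x ∂μ, f (h⁻¹ • x) * f' (h⁻¹ • x) = (γ h * γ' h) * (f x * f' x)))
    ∧ (∃ S : Subgroup (Γ →* Circle), (S : Set (Γ →* Circle)) =
        {γ : Γ →* Circle | ∃ f : X → Circle,
          Measurable f ∧ ∀ h : Γ, ∀ᵐ x ∂μ, f (h⁻¹ • x) = γ h * f x})
    ∧ {γ : Γ →* Circle | ∃ f : X → Circle,
        Measurable f ∧ ∀ h : Γ, ∀ᵐ x ∂μ, f (h⁻¹ • x) = γ h * f x}.Countable :=
  ⟨fun _ _ _ _ hf hf' => IsEigenfunction.mul hf hf', ⟨eigencharacters Γ μ, rfl⟩,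
    countable_eigencharacters hmp⟩

/-- For a measure-preserving action `β` of a countable group `Γ` on a standard Borel
probability space: (a) the product of a `γ`-eigenfunction and a `γ'`-eigenfunction is a
`γ·γ'`-eigenfunction; (b) the set `Char_β(Γ)` of characters admitting an eigenfunction is a
subgroup of `Char(Γ)`; (c) `Char_β(Γ)` is countable. -/
theorem stmt8 {Γ X : Type*} [Group Γ] [Countable Γ] [MeasurableSpace X]
    [StandardBorelSpace X] (μ : Measure X) [IsProbabilityMeasure μ] [MulAction Γ X]
    (hmp : ∀ h : Γ, MeasurePreserving (fun x : X => h • x) μ μ) :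
    (∀ (γ γ' : Γ →* Circle) (f f' : X → Circle),
      (Measurable f ∧ ∀ h : Γ, ∀ᵐ x ∂μ, f (h⁻¹ • x) = γ h * f x) →
      (Measurable f' ∧ ∀ h : Γ, ∀ᵐ x ∂μ, f' (h⁻¹ • x) = γ' h * f' x) →
      (Measurable (fun x => f x * f' x) ∧
        ∀ h : Γ, ∀ᵐ x ∂μ, f (h⁻¹ • x) * f' (h⁻¹ • x) = (γ h * γ' h) * (f x * f' x)))
    ∧ (∃ S : Subgroup (Γ →* Circle), (S : Set (Γ →* Circle)) =
        {γ : Γ →* Circle | ∃ f : X → Circle,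
          Measurable f ∧ ∀ h : Γ, ∀ᵐ x ∂μ, f (h⁻¹ • x) = γ h * f x})
    ∧ {γ : Γ →* Circle | ∃ f : X → Circle,
        Measurable f ∧ ∀ h : Γ, ∀ᵐ x ∂μ, f (h⁻¹ • x) = γ h * f x}.Countable :=
  stmt8_general μ hmp
end

section
/- Let σ be a free, weakly mixing measure-preserving action of a countable group G and β a free measure-preserving action of a countable group Γ on the same probability space (X,μ), with the two actions commuting. Let γ₀ ∈ Char(G), γ ∈ Char(Γ), and v : X → circle measurable with v(h⁻¹ •_β x) = γ(h) · v(x) for μ-a.e. x, for every h ∈ Γ. Suppose the cocycle w(g)(x) = γ₀(g) · v(g⁻¹ •_σ x) · (v(x))⁻¹ is a coboundary for the restricted action on β-invariant functions, i.e. there exists a measurable u : X → circle with u(h⁻¹ •_β x) = u(x) for μ-a.e. x for every h ∈ Γ, and w(g)(x) = u(g⁻¹ •_σ x) · (u(x))⁻¹ for μ-a.e. x, for every g ∈ G. Then γ₀ is the trivial character of G and γ is the trivial character of Γ. -/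
open MeasureTheory Filter
open scoped symmDiff
/-!
Put `F = v / u`. The coboundary equation says that `F (g⁻¹ • x) = (γ₀ g)⁻¹ * F x`, and since `u` is
`Γ`-invariant, `F (h⁻¹ • x) = γ h * F x`. The function `(x, y) ↦ F x / F y` is then invariant under
the diagonal action of `G`, so by weak mixing it is a.e. constant; hence `F` itself is a.e.
constant, and a character having an a.e. constant eigenfunction is trivial.
-/

section ErgodicAction

variable {G α : Type*} [Group G] [MulAction G α] [MeasurableSpace α] {μ : Measure α}

theorem ergodicSMul_of_measure_eq_zero_or_one [IsProbabilityMeasure μ]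
    (hmp : ∀ g : G, MeasurePreserving (g • ·) μ μ)
    (h01 : ∀ A : Set α, MeasurableSet A → (∀ g : G, μ (((g • ·) '' A) ∆ A) = 0) →
      μ A = 0 ∨ μ A = 1) :
    ErgodicSMul G α μ where
  measure_preimage_smul g _ hs := (hmp g).measure_preimage hs.nullMeasurableSet
  aeconst_of_forall_preimage_smul_ae_eq {A} hA hinv := by
    refine eventuallyConst_set.2 ((h01 A hA fun g => ?_).symm.imp (fun h => ?_) fun h => ?_)
    · rw [Set.image_smul, ← Set.preimage_smul_inv, measure_symmDiff_eq_zero_iff]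
      exact hinv g⁻¹
    · exact mem_ae_iff.2 ((prob_compl_eq_zero_iff hA).2 h)
    · exact measure_eq_zero_iff_ae_notMem.1 h

theorem ErgodicSMul.ae_eq_const_of_ae_eq_comp_smul_s10 [ErgodicSMul G α μ] {β : Type*} [Nonempty β]
    [MeasurableSpace β] [MeasurableSpace.CountablySeparated β] {f : α → β} (hf : Measurable f)
    (hinv : ∀ g : G, f ∘ (g • ·) =ᵐ[μ] f) : ∃ c, f =ᵐ[μ] Function.const α c :=
  exists_eventuallyEq_const_of_forall_separating MeasurableSet fun U hU =>
    eventuallyConst_set.1 <| MeasureTheory.aeconst_of_forall_preimage_smul_ae_eq G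
      (hf hU).nullMeasurableSet fun g =>
      (hinv g).mono fun _ hx => congrArg (· ∈ U) hx

end ErgodicAction

theorem eq_one_of_ae_comp_eq_mul_of_ae_eq_const {X M : Type*} [MeasurableSpace X] {μ : Measure X}
    [NeZero μ] [Monoid M] [IsRightCancelMul M] {T : X → X}
    (hT : Measure.QuasiMeasurePreserving T μ μ) {F : X → M} {a c : M}
    (hFT : ∀ᵐ x ∂μ, F (T x) = a * F x) (hc : F =ᵐ[μ] Function.const X c) : a = 1 := by
  obtain ⟨x, hTx, hx, hcx⟩ := (hT.ae hc |>.and (hFT.and hc)).exists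
  rw [hTx, hcx] at hx
  exact mul_eq_right.1 hx.symm

theorem ae_eq_const_of_forall_ae_smul_eq_mul {G X M : Type*} [Group G] [MulAction G X]
    [MeasurableSpace X] {μ : Measure X} [SFinite μ] [NeZero μ] [ErgodicSMul G (X × X) (μ.prod μ)]
    [CommGroup M] [MeasurableSpace M] [MeasurableDiv₂ M] [MeasurableSpace.CountablySeparated M]
    {F : X → M} (hF : Measurable F) (heig : ∀ g : G, ∃ a : M, ∀ᵐ x ∂μ, F (g • x) = a * F x) :
    ∃ c, F =ᵐ[μ] Function.const X c := by
  have hΨ : Measurable fun p : X × X => F p.1 / F p.2 :=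
    (hF.comp measurable_fst).div (hF.comp measurable_snd)
  obtain ⟨c, hc⟩ := ErgodicSMul.ae_eq_const_of_ae_eq_comp_smul_s10 (G := G) hΨ fun g => by
    obtain ⟨a, ha⟩ := heig g
    filter_upwards [Measure.quasiMeasurePreserving_fst.ae ha,
      Measure.quasiMeasurePreserving_snd.ae ha] with p h1 h2
    simp only [Function.comp_apply, Prod.smul_fst, Prod.smul_snd, h1, h2, mul_div_mul_left_eq_div]
  obtain ⟨x₀, hx₀⟩ := (Measure.ae_ae_of_ae_prod hc).exists
  refine ⟨F x₀ / c, hx₀.mono fun y hy => ?_⟩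
  simp only [Function.const_apply] at hy ⊢
  rw [← hy, div_div_cancel]

theorem stmt10_general {G Γ X : Type*} [Group G] [Group Γ]
    [MeasurableSpace X] (μ : Measure X) [IsProbabilityMeasure μ]
    [MulAction G X] [MulAction Γ X]
    (hmpG : ∀ g : G, MeasurePreserving (fun x : X => g • x) μ μ)
    (hmpΓ : ∀ h : Γ, MeasurePreserving (fun x : X => h • x) μ μ)
    (hwmix : ∀ A : Set (X × X), MeasurableSet A →
      (∀ g : G, (μ.prod μ) (((fun p : X × X => (g • p.1, g • p.2)) '' A) ∆ A) = 0) →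
      (μ.prod μ) A = 0 ∨ (μ.prod μ) A = 1)
    (γ₀ : G →* Circle) (γ : Γ →* Circle)
    (v : X → Circle) (hv : Measurable v)
    (hvγ : ∀ h : Γ, ∀ᵐ x ∂μ, v (h⁻¹ • x) = γ h * v x)
    (u : X → Circle) (hu : Measurable u)
    (huinv : ∀ h : Γ, ∀ᵐ x ∂μ, u (h⁻¹ • x) = u x)
    (hcob : ∀ g : G, ∀ᵐ x ∂μ, γ₀ g * v (g⁻¹ • x) * (v x)⁻¹ = u (g⁻¹ • x) * (u x)⁻¹) :
    γ₀ = 1 ∧ γ = 1 := by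
  have : ErgodicSMul G (X × X) (μ.prod μ) :=
    ergodicSMul_of_measure_eq_zero_or_one (fun g => (hmpG g).prod (hmpG g)) hwmix
  set F : X → Circle := v / u with hF
  have hFG : ∀ g : G, ∀ᵐ x ∂μ, F (g⁻¹ • x) = (γ₀ g)⁻¹ * F x := fun g =>
    (hcob g).mono fun x hx => by
      simp only [hF, Pi.div_apply]
      rw [← div_eq_mul_inv, ← div_eq_mul_inv, div_eq_div_iff_mul_eq_mul] at hx
      rw [eq_inv_mul_iff_mul_eq, ← mul_div_assoc, div_eq_div_iff_mul_eq_mul, hx, mul_comm]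
  have hFΓ : ∀ h : Γ, ∀ᵐ x ∂μ, F (h⁻¹ • x) = γ h * F x := fun h => by
    filter_upwards [hvγ h, huinv h] with x hvx hux
    simp only [hF, Pi.div_apply, hvx, hux, mul_div_assoc]
  obtain ⟨c, hc⟩ := ae_eq_const_of_forall_ae_smul_eq_mul (G := G) (F := F) (hv.div hu)
    fun g => ⟨_, by simpa only [inv_inv] using hFG g⁻¹⟩
  refine ⟨MonoidHom.ext fun g => ?_, MonoidHom.ext fun h => ?_⟩
  · exact inv_eq_one.1 <|
      eq_one_of_ae_comp_eq_mul_of_ae_eq_const (hmpG g⁻¹).quasiMeasurePreserving (hFG g) hc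
  · exact eq_one_of_ae_comp_eq_mul_of_ae_eq_const (hmpΓ h⁻¹).quasiMeasurePreserving (hFΓ h) hc

/-- Let `σ` be a free weakly mixing m.p. action of `G` and `β` a free m.p. action of `Γ`,
commuting with `σ`. If the cocycle `w(g) = γ₀(g) σ_g(v) v*` associated to `γ₀ ∈ Char(G)`,
`γ ∈ Char_β(Γ)` and a `γ`-eigenfunction `v` is a coboundary over the `β`-invariant
unitaries, then `γ₀` and `γ` are both trivial. -/
theorem stmt10 {G Γ X : Type*} [Group G] [Group Γ] [Countable G] [Countable Γ]
    [MeasurableSpace X] (μ : Measure X) [IsProbabilityMeasure μ]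
    [MulAction G X] [MulAction Γ X]
    (hmpG : ∀ g : G, MeasurePreserving (fun x : X => g • x) μ μ)
    (hmpΓ : ∀ h : Γ, MeasurePreserving (fun x : X => h • x) μ μ)
    (hfreeG : ∀ g : G, g ≠ 1 → μ {x : X | g • x = x} = 0)
    (hfreeΓ : ∀ h : Γ, h ≠ 1 → μ {x : X | h • x = x} = 0)
    (hwmix : ∀ A : Set (X × X), MeasurableSet A →
      (∀ g : G, (μ.prod μ) (((fun p : X × X => (g • p.1, g • p.2)) '' A) ∆ A) = 0) →
      (μ.prod μ) A = 0 ∨ (μ.prod μ) A = 1)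
    (hcomm : ∀ (g : G) (h : Γ) (x : X), g • (h • x) = h • (g • x))
    (γ₀ : G →* Circle) (γ : Γ →* Circle)
    (v : X → Circle) (hv : Measurable v)
    (hvγ : ∀ h : Γ, ∀ᵐ x ∂μ, v (h⁻¹ • x) = γ h * v x)
    (u : X → Circle) (hu : Measurable u)
    (huinv : ∀ h : Γ, ∀ᵐ x ∂μ, u (h⁻¹ • x) = u x)
    (hcob : ∀ g : G, ∀ᵐ x ∂μ, γ₀ g * v (g⁻¹ • x) * (v x)⁻¹ = u (g⁻¹ • x) * (u x)⁻¹) :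
    γ₀ = 1 ∧ γ = 1 :=
  stmt10_general μ hmpG hmpΓ hwmix γ₀ γ v hv hvγ u hu huinv hcob
end

section
/- Let σ be a free, weakly mixing measure-preserving action of a countable group G and β a free measure-preserving action of a countable group Γ on the same probability space (X,μ), with the two actions commuting. Assume that every 1-cocycle for σ is cohomologous to a constant character, i.e. for every 1-cocycle w' for σ there exist γ' ∈ Char(G) and a measurable u : X → circle with w'(g)(x) = (u(x))⁻¹ · γ'(g) · u(g⁻¹ •_σ x) for μ-a.e. x, for every g. Let w be a 1-cocycle for σ such that every w(g) is β-invariant almost everywhere: w(g)(h⁻¹ •_β x) = w(g)(x) for μ-a.e. x, for all g ∈ G, h ∈ Γ. Then there exist γ₀ ∈ Char(G), γ ∈ Char(Γ), and a measurable v : X → circle with v(h⁻¹ •_β x) = γ(h) · v(x) for μ-a.e. x for every h ∈ Γ, such that w(g)(x) = γ₀(g) · v(g⁻¹ •_σ x) · (v(x))⁻¹ for μ-a.e. x, for every g ∈ G. -/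
open MeasureTheory Filter
open scoped symmDiff Pointwise

/-!
The cohomology hypothesis gives `w g = u⁻¹ * γ₀ g * (u ∘ σ_g⁻¹)`. Since `w` is `β`-invariant and
the actions commute, the `β`-coboundary `(u ∘ β_h⁻¹) / u` of `u` is `σ`-invariant; weak mixing
implies ergodicity, so it is a.e. a constant `γ h`, and `γ` is a character because coboundaries
are cocycles. Then `v = u` works.
-/

section

variable {G Γ X M : Type*} [Group G] [Group Γ] [MulAction G X] [MulAction Γ X] [CommGroup M]
  [MeasurableSpace X] {μ : Measure X}

theorem ae_mem_or_ae_notMem_of_weakMixing [IsProbabilityMeasure μ]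
    (hwmix : ∀ A : Set (X × X), MeasurableSet A →
      (∀ g : G, (μ.prod μ) (((fun p : X × X => (g • p.1, g • p.2)) '' A) ∆ A) = 0) →
      (μ.prod μ) A = 0 ∨ (μ.prod μ) A = 1)
    {B : Set X} (hB : MeasurableSet B) (hBinv : ∀ g : G, μ ((g • B) ∆ B) = 0) :
    (∀ᵐ x ∂μ, x ∈ B) ∨ ∀ᵐ x ∂μ, x ∉ B := by
  have himage (g : G) : (fun p : X × X => (g • p.1, g • p.2)) '' (B ×ˢ Set.univ)
      = (g • B) ×ˢ Set.univ := by
    rw [← Set.prod_image_image_eq, Set.image_univ_of_surjective (MulAction.surjective g)]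
    rfl
  have hsymmDiff (B' : Set X) :
      (B' ×ˢ Set.univ) ∆ (B ×ˢ Set.univ) = (B' ∆ B) ×ˢ (Set.univ : Set X) := by
    ext; simp [Set.mem_symmDiff]
  have hB01 : μ B = 0 ∨ μ B = 1 := by
    simpa only [Measure.prod_prod, measure_univ, mul_one] using
      hwmix (B ×ˢ Set.univ) (hB.prod .univ) fun g => by
        rw [himage, hsymmDiff, Measure.prod_prod, hBinv, zero_mul]
  rw [ae_mem_iff_measure_eq hB.nullMeasurableSet, ← measure_eq_zero_iff_ae_notMem,
    measure_univ]
  exact hB01.symm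

theorem exists_ae_eq_const_of_ae_invariant {Y : Type*} [MeasurableSpace Y]
    [MeasurableSpace.CountablySeparated Y] [Nonempty Y]
    (herg : ∀ B : Set X, MeasurableSet B → (∀ g : G, μ ((g • B) ∆ B) = 0) →
      (∀ᵐ x ∂μ, x ∈ B) ∨ ∀ᵐ x ∂μ, x ∉ B)
    {f : X → Y} (hf : Measurable f) (hinv : ∀ g : G, ∀ᵐ x ∂μ, f (g⁻¹ • x) = f x) :
    ∃ c, f =ᵐ[μ] fun _ => c :=
  exists_eventuallyEq_const_of_forall_separating MeasurableSet fun U hU =>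
    herg (f ⁻¹' U) (hf hU) fun g => by
      rw [← Set.preimage_smul_inv, measure_symmDiff_eq_zero_iff]
      exact EventuallyEq.preimage (f := fun x => f (g⁻¹ • x)) (hinv g) U

theorem exists_monoidHom_of_ae_eq_const_div [NeZero μ]
    (hqmp : ∀ h : Γ, Measure.QuasiMeasurePreserving (fun x : X => h • x) μ μ) (u : X → M)
    (hconst : ∀ h : Γ, ∃ c, ∀ᵐ x ∂μ, u (h⁻¹ • x) / u x = c) :
    ∃ γ : Γ →* M, ∀ h : Γ, ∀ᵐ x ∂μ, u (h⁻¹ • x) = γ h * u x := by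
  choose c hc using hconst
  have hmul (h₁ h₂ : Γ) : c (h₁ * h₂) = c h₁ * c h₂ := by
    have hc₂ := (hqmp h₁⁻¹).ae (hc h₂)
    obtain ⟨x, hx₁₂, hx₁, hx₂⟩ := ((hc (h₁ * h₂)).and ((hc h₁).and hc₂)).exists
    rw [← hx₁₂, ← hx₁, ← hx₂, mul_inv_rev, mul_smul, mul_comm, div_mul_div_cancel]
  refine ⟨MonoidHom.mk' c hmul, fun h => ?_⟩
  filter_upwards [hc h] with x hx
  rw [MonoidHom.mk'_apply, ← hx, div_mul_cancel]

theorem ae_invariant_div_smul_of_cohomologous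
    (hcomm : ∀ (g : G) (h : Γ) (x : X), g • (h • x) = h • (g • x))
    (hqmp : ∀ h : Γ, Measure.QuasiMeasurePreserving (fun x : X => h • x) μ μ)
    {w : G → X → M} {c : G → M} {u : X → M}
    (hwu : ∀ g : G, ∀ᵐ x ∂μ, w g x = (u x)⁻¹ * c g * u (g⁻¹ • x))
    (hwinv : ∀ (g : G) (h : Γ), ∀ᵐ x ∂μ, w g (h⁻¹ • x) = w g x) (g : G) (h : Γ) :
    ∀ᵐ x ∂μ, u (h⁻¹ • g⁻¹ • x) / u (g⁻¹ • x) = u (h⁻¹ • x) / u x := by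
  filter_upwards [hwu g, (hqmp h⁻¹).ae (hwu g), hwinv g h] with x hx hhx hinv
  rw [hinv, hx, hcomm] at hhx
  rw [div_eq_div_iff_div_eq_div, ← inv_mul_eq_div, ← inv_mul_eq_div, ← mul_left_inj (c g),
    mul_right_comm, ← hhx, mul_right_comm]

end

theorem stmt11_general {G Γ X : Type*} [Group G] [Group Γ]
    [MeasurableSpace X] (μ : Measure X) [IsProbabilityMeasure μ]
    [MulAction G X] [MulAction Γ X]
    (hmpΓ : ∀ h : Γ, MeasurePreserving (fun x : X => h • x) μ μ)
    (hwmix : ∀ A : Set (X × X), MeasurableSet A →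
      (∀ g : G, (μ.prod μ) (((fun p : X × X => (g • p.1, g • p.2)) '' A) ∆ A) = 0) →
      (μ.prod μ) A = 0 ∨ (μ.prod μ) A = 1)
    (hcomm : ∀ (g : G) (h : Γ) (x : X), g • (h • x) = h • (g • x))
    (hcohom : ∀ w' : G → X → Circle, (∀ g : G, Measurable (w' g)) →
      (∀ g g' : G, ∀ᵐ x ∂μ, w' (g * g') x = w' g x * w' g' (g⁻¹ • x)) →
      ∃ (γ' : G →* Circle) (u : X → Circle), Measurable u ∧
        ∀ g : G, ∀ᵐ x ∂μ, w' g x = (u x)⁻¹ * γ' g * u (g⁻¹ • x))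
    (w : G → X → Circle) (hwmeas : ∀ g : G, Measurable (w g))
    (hwcoc : ∀ g g' : G, ∀ᵐ x ∂μ, w (g * g') x = w g x * w g' (g⁻¹ • x))
    (hwinv : ∀ (g : G) (h : Γ), ∀ᵐ x ∂μ, w g (h⁻¹ • x) = w g x) :
    ∃ (γ₀ : G →* Circle) (γ : Γ →* Circle) (v : X → Circle), Measurable v ∧
      (∀ h : Γ, ∀ᵐ x ∂μ, v (h⁻¹ • x) = γ h * v x) ∧
      ∀ g : G, ∀ᵐ x ∂μ, w g x = γ₀ g * v (g⁻¹ • x) * (v x)⁻¹ := by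
  obtain ⟨γ₀, u, hu, hwu⟩ := hcohom w hwmeas hwcoc
  have hqmp (h : Γ) := (hmpΓ h).quasiMeasurePreserving
  have herg (B : Set X) := ae_mem_or_ae_notMem_of_weakMixing (B := B) hwmix
  have hconst (h : Γ) : ∃ c, ∀ᵐ x ∂μ, u (h⁻¹ • x) / u x = c :=
    exists_ae_eq_const_of_ae_invariant herg ((hu.comp (hmpΓ h⁻¹).measurable).div hu)
      (ae_invariant_div_smul_of_cohomologous hcomm hqmp hwu hwinv · h)
  obtain ⟨γ, hγ⟩ := exists_monoidHom_of_ae_eq_const_div hqmp u hconst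
  refine ⟨γ₀, γ, u, hu, hγ, fun g => ?_⟩
  filter_upwards [hwu g] with x hx
  rw [hx, mul_comm (u x)⁻¹, mul_right_comm]

/-- Let `σ` be a free weakly mixing m.p. action of `G` and `β` a free m.p. action of `Γ`,
commuting with `σ`. If every 1-cocycle for `σ` is cohomologous to a character and `w` is a
1-cocycle for `σ` taking `β`-invariant values, then `w(g) = γ₀(g) σ_g(v) v*` for some
`γ₀ ∈ Char(G)`, `γ ∈ Char(Γ)` and some `γ`-eigenfunction `v` for `β`. -/
theorem stmt11 {G Γ X : Type*} [Group G] [Group Γ] [Countable G] [Countable Γ]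
    [MeasurableSpace X] (μ : Measure X) [IsProbabilityMeasure μ]
    [MulAction G X] [MulAction Γ X]
    (hmpG : ∀ g : G, MeasurePreserving (fun x : X => g • x) μ μ)
    (hmpΓ : ∀ h : Γ, MeasurePreserving (fun x : X => h • x) μ μ)
    (hfreeG : ∀ g : G, g ≠ 1 → μ {x : X | g • x = x} = 0)
    (hfreeΓ : ∀ h : Γ, h ≠ 1 → μ {x : X | h • x = x} = 0)
    (hwmix : ∀ A : Set (X × X), MeasurableSet A →
      (∀ g : G, (μ.prod μ) (((fun p : X × X => (g • p.1, g • p.2)) '' A) ∆ A) = 0) →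
      (μ.prod μ) A = 0 ∨ (μ.prod μ) A = 1)
    (hcomm : ∀ (g : G) (h : Γ) (x : X), g • (h • x) = h • (g • x))
    (hcohom : ∀ w' : G → X → Circle, (∀ g : G, Measurable (w' g)) →
      (∀ g g' : G, ∀ᵐ x ∂μ, w' (g * g') x = w' g x * w' g' (g⁻¹ • x)) →
      ∃ (γ' : G →* Circle) (u : X → Circle), Measurable u ∧
        ∀ g : G, ∀ᵐ x ∂μ, w' g x = (u x)⁻¹ * γ' g * u (g⁻¹ • x))
    (w : G → X → Circle) (hwmeas : ∀ g : G, Measurable (w g))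
    (hwcoc : ∀ g g' : G, ∀ᵐ x ∂μ, w (g * g') x = w g x * w g' (g⁻¹ • x))
    (hwinv : ∀ (g : G) (h : Γ), ∀ᵐ x ∂μ, w g (h⁻¹ • x) = w g x) :
    ∃ (γ₀ : G →* Circle) (γ : Γ →* Circle) (v : X → Circle), Measurable v ∧
      (∀ h : Γ, ∀ᵐ x ∂μ, v (h⁻¹ • x) = γ h * v x) ∧
      ∀ g : G, ∀ᵐ x ∂μ, w g x = γ₀ g * v (g⁻¹ • x) * (v x)⁻¹ :=
  stmt11_general μ hmpΓ hwmix hcomm hcohom w hwmeas hwcoc hwinv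
end

section
/- Let K be a compact, second-countable, abelian topological group with Haar probability measure μ, let Γ be a countable dense subgroup of K, acting on K by translation, and let γ : Γ → circle be a group homomorphism. Then the following are equivalent: (i) there exists a measurable function f : K → circle such that for every c ∈ Γ, f(c · x) = γ(c) · f(x) for μ-almost every x ∈ K; (ii) there exists a continuous group homomorphism χ : K → circle with χ(c) = γ(c) for all c ∈ Γ. -/
/-!
If `f` is a measurable eigenfunction for the translations by a dense subgroup, then for every
`y` the ratio `f (y * x) / f x` is a.e. invariant under that subgroup, hence a.e. equal to a
constant `χ y` by ergodicity of a dense set of translations. Thus `f` is an eigenfunction of every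
translation, and uniqueness of eigenvalues makes `χ` a homomorphism extending `γ`. Continuity
comes from `μ(K) χ y = ⟪f, f (y * ·)⟫` in `L²(μ)`: translation acts continuously on `L²`.
-/

open MeasureTheory Filter

section DenseInvariance

variable {M X α : Type*} [TopologicalSpace M] [TopologicalSpace X] [R1Space X]
  [MeasurableSpace X] [BorelSpace X] [SMul M X] [ContinuousSMul M X]
  {μ : Measure X} [IsFiniteMeasure μ] [μ.InnerRegular] [ErgodicSMul M X μ]
  [Nonempty α] [MeasurableSpace α] [MeasurableSpace.CountablySeparated α]

theorem exists_ae_eq_const_of_dense_ae_smul_invariant {s : Set M} (hs : Dense s)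
    {g : X → α} (hg : Measurable g) (hinv : ∀ c ∈ s, ∀ᵐ x ∂μ, g (c • x) = g x) :
    ∃ z, g =ᵐ[μ] Function.const X z := by
  refine exists_eventuallyEq_const_of_forall_separating MeasurableSet fun U hU ↦
    eventuallyConst_set.mp <| aeconst_of_dense_setOfPred_preimage_smul_ae
      (hg hU).nullMeasurableSet <| hs.mono fun c hc ↦ ?_
  refine Set.mem_ofPred.2 <| eventuallyEq_set.2 ?_
  filter_upwards [hinv c hc] with x hx
  exact Iff.of_eq (congrArg (· ∈ U) hx)

end DenseInvariance

section Eigenfunction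

variable {G A : Type*} [Semigroup G] [MeasurableSpace G] {μ : Measure G} {f : G → A}

theorem eq_of_ae_mul_left_eq_mul [Group A] [NeZero μ] {y : G} {a b : A}
    (ha : ∀ᵐ x ∂μ, f (y * x) = a * f x) (hb : ∀ᵐ x ∂μ, f (y * x) = b * f x) : a = b := by
  obtain ⟨x, hxa, hxb⟩ := (ha.and hb).exists
  exact mul_right_cancel (hxa.symm.trans hxb)

variable [MeasurableMul G] [μ.IsMulLeftInvariant]

theorem ae_mul_left_eq_mul_mul [Monoid A] {y z : G} {a b : A}
    (ha : ∀ᵐ x ∂μ, f (y * x) = a * f x) (hb : ∀ᵐ x ∂μ, f (z * x) = b * f x) :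
    ∀ᵐ x ∂μ, f (y * z * x) = a * b * f x := by
  filter_upwards [(measurePreserving_mul_left μ z).quasiMeasurePreserving.ae ha, hb]
    with x hyzx hzx
  rw [mul_assoc, hyzx, hzx, mul_assoc]

end Eigenfunction

theorem exists_ae_mul_left_eq_mul_of_dense {G A : Type*} [CommGroup G] [TopologicalSpace G]
    [IsTopologicalGroup G] [MeasurableSpace G] [BorelSpace G] [SecondCountableTopology G]
    {μ : Measure G} [IsFiniteMeasure μ] [μ.InnerRegular] [μ.IsMulLeftInvariant]
    [CommGroup A] [MeasurableSpace A] [MeasurableDiv₂ A] [MeasurableSpace.CountablySeparated A]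
    {f : G → A} (hf : Measurable f) {s : Set G} (hs : Dense s)
    (heigen : ∀ c ∈ s, ∃ a, ∀ᵐ x ∂μ, f (c * x) = a * f x) (y : G) :
    ∃ a, ∀ᵐ x ∂μ, f (y * x) = a * f x := by
  have hquot : ∀ c ∈ s, ∀ᵐ x ∂μ, f (y * (c * x)) / f (c * x) = f (y * x) / f x := by
    intro c hc
    obtain ⟨a, ha⟩ := heigen c hc
    filter_upwards [ha, (measurePreserving_mul_left μ y).quasiMeasurePreserving.ae ha]
      with x hcx hcyx
    rw [mul_left_comm, hcyx, hcx, mul_div_mul_left_eq_div]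
  obtain ⟨a, ha⟩ := exists_ae_eq_const_of_dense_ae_smul_invariant (μ := μ) hs
    ((hf.comp (measurable_const_mul y)).div hf) hquot
  refine ⟨a, ?_⟩
  filter_upwards [ha] with x hx
  exact div_eq_iff_eq_mul.mp hx

theorem continuous_of_ae_mul_left_eq_mul {G : Type*} [Group G] [TopologicalSpace G]
    [IsTopologicalGroup G] [MeasurableSpace G] [BorelSpace G]
    {μ : Measure G} [IsFiniteMeasure μ] [NeZero μ] [μ.IsMulLeftInvariant]
    [μ.InnerRegularCompactLTTop] {f : G → Circle} (hf : Measurable f) {χ : G → Circle}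
    (hχ : ∀ y, ∀ᵐ x ∂μ, f (y * x) = χ y * f x) : Continuous χ := by
  have hF : MemLp (fun x ↦ (f x : ℂ)) 2 μ :=
    .of_bound (by fun_prop) 1 (ae_of_all _ fun x ↦ (Circle.norm_coe _).le)
  set F : Lp ℂ 2 μ := hF.toLp _
  have hFf : F =ᵐ[μ] fun x ↦ (f x : ℂ) := hF.coeFn_toLp
  have hinner : ∀ y, inner ℂ F (DomMulAct.mk y • F) = μ.real Set.univ * χ y := by
    intro y
    have hpoint : ∀ᵐ x ∂μ, inner ℂ (F x) ((DomMulAct.mk y • F) x) = (χ y : ℂ) := by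
      filter_upwards [hFf, DomMulAct.smul_Lp_ae_eq (DomMulAct.mk y) F,
        (measurePreserving_mul_left μ y).quasiMeasurePreserving.ae hFf, hχ y]
        with x hFx hyF hFyx hfyx
      rw [Equiv.symm_apply_apply, smul_eq_mul] at hyF
      rw [hyF, hFx, hFyx, hfyx, Circle.coe_mul, RCLike.inner_apply, ← Circle.coe_inv_eq_conj,
        mul_assoc, ← Circle.coe_mul, mul_inv_cancel, Circle.coe_one, mul_one]
    rw [L2.inner_def, integral_congr_ae hpoint, integral_const, Complex.real_smul]
  have : Fact ((2 : ENNReal) ≠ ⊤) := ⟨ENNReal.ofNat_ne_top⟩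
  have hcont : Continuous fun y : G ↦ inner ℂ F (DomMulAct.mk y • F) :=
    continuous_const.inner (DomMulAct.continuous_mk.smul continuous_const)
  have hμ : (μ.real Set.univ : ℂ) ≠ 0 := by exact_mod_cast measureReal_univ_ne_zero
  refine continuous_induced_rng.2 <|
    ((continuous_const (y := (μ.real Set.univ : ℂ)⁻¹)).mul hcont).congr fun y ↦ ?_
  change (μ.real Set.univ : ℂ)⁻¹ * inner ℂ F (DomMulAct.mk y • F) = χ y
  rw [hinner, inv_mul_cancel_left₀ hμ]

theorem stmt12_general {K : Type*} [CommGroup K] [TopologicalSpace K] [IsTopologicalGroup K]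
    [CompactSpace K] [SecondCountableTopology K] [MeasurableSpace K] [BorelSpace K]
    (μ : Measure K) [μ.IsHaarMeasure] [IsProbabilityMeasure μ]
    (Γ : Subgroup K) (hdense : Dense (Γ : Set K))
    (γ : Γ →* Circle) :
    (∃ f : K → Circle, Measurable f ∧
      ∀ c : Γ, ∀ᵐ x ∂μ, f ((c : K) * x) = γ c * f x)
    ↔ ∃ χ : K →* Circle, Continuous χ ∧ ∀ c : Γ, χ (c : K) = γ c := by
  constructor
  · rintro ⟨f, hf, heigen⟩
    choose χ hχ using exists_ae_mul_left_eq_mul_of_dense hf hdense fun c hc ↦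
      ⟨γ ⟨c, hc⟩, heigen ⟨c, hc⟩⟩
    refine ⟨MonoidHom.mk' χ fun y z ↦ ?_, continuous_of_ae_mul_left_eq_mul hf hχ,
      fun c ↦ eq_of_ae_mul_left_eq_mul (hχ c) (heigen c)⟩
    exact eq_of_ae_mul_left_eq_mul (hχ (y * z)) (ae_mul_left_eq_mul_mul (hχ y) (hχ z))
  · rintro ⟨χ, hχc, hχ⟩
    exact ⟨χ, hχc.measurable, fun c ↦ ae_of_all _ fun x ↦ by rw [map_mul, hχ c]⟩

/-- Let `K` be a compact second-countable abelian group with Haar probability measure `μ` and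
`Γ ≤ K` a countable dense subgroup acting on `K` by translation. A character `γ : Γ → circle`
admits a measurable eigenfunction `f : K → circle` (i.e. `f(c·x) = γ(c)·f(x)` a.e. for each
`c ∈ Γ`) if and only if `γ` extends to a continuous character `χ : K → circle`. -/
theorem stmt12 {K : Type*} [CommGroup K] [TopologicalSpace K] [IsTopologicalGroup K]
    [CompactSpace K] [SecondCountableTopology K] [MeasurableSpace K] [BorelSpace K]
    (μ : Measure K) [μ.IsHaarMeasure] [IsProbabilityMeasure μ]
    (Γ : Subgroup K) [Countable Γ] (hdense : Dense (Γ : Set K))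
    (γ : Γ →* Circle) :
    (∃ f : K → Circle, Measurable f ∧
      ∀ c : Γ, ∀ᵐ x ∂μ, f ((c : K) * x) = γ c * f x)
    ↔ ∃ χ : K →* Circle, Continuous χ ∧ ∀ c : Γ, χ (c : K) = γ c :=
  stmt12_general μ Γ hdense γ
end

section
/- Let K be a compact Hausdorff abelian topological group and let Λ₁ and Λ₂ be countable abelian groups, each equipped with the discrete topology. Suppose there exists an isomorphism of topological groups θ : K × Λ₁ ≅ K × Λ₂. Then Λ₁ and Λ₂ are virtually isomorphic: there exist an abelian group E and finite subgroups F₁, F₂ of E such that E/F₁ ≅ Λ₁ and E/F₂ ≅ Λ₂. -/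
/-!
Both `K × 1` and `θ⁻¹(K × 1)` are compact open subgroups of `G = K × Λ₁`, with quotients `Λ₁`
and `Λ₂`. Their intersection `N` is open, so `G ⧸ N` is discrete and the images of the two
compact subgroups in it are finite; modulo these images, `G ⧸ N` is `Λ₁`, resp. `Λ₂`.
-/

open QuotientGroup

def VirtuallyIsomorphic (Λ₁ Λ₂ : Type*) [CommGroup Λ₁] [CommGroup Λ₂] : Prop :=
  ∃ (E : Type) (_ : CommGroup E) (F₁ F₂ : Subgroup E),
    Finite F₁ ∧ Finite F₂ ∧ Nonempty ((E ⧸ F₁) ≃* Λ₁) ∧ Nonempty ((E ⧸ F₂) ≃* Λ₂)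

namespace VirtuallyIsomorphic

variable {Λ₁ Λ₂ Γ₁ Γ₂ : Type*} [CommGroup Λ₁] [CommGroup Λ₂] [CommGroup Γ₁] [CommGroup Γ₂]

theorem of_mulEquiv (h : VirtuallyIsomorphic Λ₁ Λ₂) (e₁ : Λ₁ ≃* Γ₁) (e₂ : Λ₂ ≃* Γ₂) :
    VirtuallyIsomorphic Γ₁ Γ₂ := by
  obtain ⟨E, _, F₁, F₂, hF₁, hF₂, ⟨q₁⟩, ⟨q₂⟩⟩ := h
  exact ⟨E, _, F₁, F₂, hF₁, hF₂, ⟨q₁.trans e₁⟩, ⟨q₂.trans e₂⟩⟩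

end VirtuallyIsomorphic

theorem Subgroup.finite_comap_mulEquiv {E A : Type*} [Group E] [Group A] (e : E ≃* A)
    (F : Subgroup A) [Finite F] : Finite (F.comap e.toMonoidHom) :=
  Finite.of_injective (e.toMonoidHom.subgroupComap F) fun _ _ h =>
    Subtype.ext (e.injective (congrArg Subtype.val h))

theorem Subgroup.countable_of_finite_of_countable_quotient {A : Type*} [Group A] (F : Subgroup A)
    [Finite F] [Countable (A ⧸ F)] : Countable A :=
  Countable.of_equiv _ F.groupEquivQuotientProdSubgroup.symm

theorem virtuallyIsomorphic_quotient_quotient {A : Type*} [CommGroup A] [Countable A]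
    (F₁ F₂ : Subgroup A) [Finite F₁] [Finite F₂] : VirtuallyIsomorphic (A ⧸ F₁) (A ⧸ F₂) := by
  let e : Shrink.{0} A ≃* A := Shrink.mulEquiv
  refine ⟨Shrink A, inferInstance, F₁.comap e.toMonoidHom, F₂.comap e.toMonoidHom,
    F₁.finite_comap_mulEquiv e, F₂.finite_comap_mulEquiv e, ⟨congr _ _ e ?_⟩, ⟨congr _ _ e ?_⟩⟩ <;>
  exact Subgroup.map_comap_eq_self_of_surjective e.surjective _

theorem Subgroup.finite_map_mk'_of_isCompact_of_isOpen {G : Type*} [Group G] [TopologicalSpace G]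
    [SeparatelyContinuousMul G] {H N : Subgroup G} [N.Normal]
    (hH : IsCompact (H : Set G)) (hN : IsOpen (N : Set G)) : Finite (H.map (mk' N)) := by
  have := discreteTopology hN
  have : (H.map (mk' N) : Set (G ⧸ N)).Finite := by
    rw [Subgroup.coe_map]
    exact (hH.image QuotientGroup.continuous_mk).finite_of_discrete
  exact this.to_subtype

theorem virtuallyIsomorphic_quotient_of_isCompact_of_isOpen {G : Type*} [CommGroup G]
    [TopologicalSpace G] [SeparatelyContinuousMul G] {H₁ H₂ : Subgroup G} [Countable (G ⧸ H₁)]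
    (hc₁ : IsCompact (H₁ : Set G)) (hc₂ : IsCompact (H₂ : Set G))
    (ho₁ : IsOpen (H₁ : Set G)) (ho₂ : IsOpen (H₂ : Set G)) :
    VirtuallyIsomorphic (G ⧸ H₁) (G ⧸ H₂) := by
  set N := H₁ ⊓ H₂
  have hN : IsOpen (N : Set G) := ho₁.inter ho₂
  have := Subgroup.finite_map_mk'_of_isCompact_of_isOpen hc₁ hN
  have := Subgroup.finite_map_mk'_of_isCompact_of_isOpen hc₂ hN
  have e₁ := quotientQuotientEquivQuotient N H₁ inf_le_left
  have : Countable ((G ⧸ N) ⧸ H₁.map (mk' N)) := Countable.of_equiv _ e₁.symm.toEquiv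
  have := (H₁.map (mk' N)).countable_of_finite_of_countable_quotient
  exact (virtuallyIsomorphic_quotient_quotient _ _).of_mulEquiv e₁
    (quotientQuotientEquivQuotient N H₂ inf_le_right)

theorem MonoidHom.isOpen_ker {G Λ : Type*} [Group G] [TopologicalSpace G] [Group Λ]
    [TopologicalSpace Λ] [DiscreteTopology Λ] {f : G →* Λ} (hf : Continuous f) :
    IsOpen (f.ker : Set G) :=
  (isOpen_discrete {1}).preimage hf

theorem MonoidHom.isCompact_ker_snd (K Λ : Type*) [Group K] [TopologicalSpace K] [CompactSpace K]
    [Group Λ] [TopologicalSpace Λ] :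
    IsCompact ((MonoidHom.snd K Λ).ker : Set (K × Λ)) := by
  rw [MonoidHom.ker_snd, Subgroup.coe_prod]
  simpa using isCompact_univ.prod isCompact_singleton

theorem stmt13_general {K Λ₁ Λ₂ : Type*} [CommGroup K] [TopologicalSpace K] [IsTopologicalGroup K]
    [CompactSpace K]
    [CommGroup Λ₁] [Countable Λ₁] [TopologicalSpace Λ₁] [DiscreteTopology Λ₁]
    [CommGroup Λ₂] [TopologicalSpace Λ₂] [DiscreteTopology Λ₂]
    (θ : (K × Λ₁) ≃* (K × Λ₂)) (hθ : Continuous θ) (hθsymm : Continuous θ.symm) :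
    ∃ (E : Type) (_ : CommGroup E) (F₁ F₂ : Subgroup E),
      Finite F₁ ∧ Finite F₂ ∧ Nonempty ((E ⧸ F₁) ≃* Λ₁) ∧ Nonempty ((E ⧸ F₂) ≃* Λ₂) := by
  let π₁ := MonoidHom.snd K Λ₁
  let π₂ := (MonoidHom.snd K Λ₂).comp θ.toMonoidHom
  let θₜ : K × Λ₁ ≃ₜ K × Λ₂ := ⟨θ.toEquiv, hθ, hθsymm⟩
  have e₁ := quotientKerEquivOfSurjective π₁ Prod.snd_surjective
  have e₂ := quotientKerEquivOfSurjective π₂ (Prod.snd_surjective.comp θ.surjective)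
  have : Countable ((K × Λ₁) ⧸ π₁.ker) := Countable.of_equiv _ e₁.symm.toEquiv
  have hπ₂ : IsCompact (π₂.ker : Set (K × Λ₁)) :=
    θₜ.isCompact_preimage.mpr (MonoidHom.isCompact_ker_snd K Λ₂)
  exact (virtuallyIsomorphic_quotient_of_isCompact_of_isOpen (MonoidHom.isCompact_ker_snd K Λ₁)
    hπ₂ (MonoidHom.isOpen_ker continuous_snd) (MonoidHom.isOpen_ker (continuous_snd.comp hθ))
    ).of_mulEquiv e₁ e₂

/-- If `K` is a compact Hausdorff abelian topological group, `Λ₁, Λ₂` are countable abelian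
groups with the discrete topology, and `K × Λ₁ ≅ K × Λ₂` as topological groups, then `Λ₁`
and `Λ₂` are virtually isomorphic: they are quotients of a common abelian group by finite
subgroups. -/
theorem stmt13 {K Λ₁ Λ₂ : Type*} [CommGroup K] [TopologicalSpace K] [IsTopologicalGroup K]
    [CompactSpace K] [T2Space K]
    [CommGroup Λ₁] [Countable Λ₁] [TopologicalSpace Λ₁] [DiscreteTopology Λ₁]
    [CommGroup Λ₂] [Countable Λ₂] [TopologicalSpace Λ₂] [DiscreteTopology Λ₂]
    (θ : (K × Λ₁) ≃* (K × Λ₂)) (hθ : Continuous θ) (hθsymm : Continuous θ.symm) :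
    ∃ (E : Type) (_ : CommGroup E) (F₁ F₂ : Subgroup E),
      Finite F₁ ∧ Finite F₂ ∧ Nonempty ((E ⧸ F₁) ≃* Λ₁) ∧ Nonempty ((E ⧸ F₂) ≃* Λ₂) :=
  stmt13_general θ hθ hθsymm
end

section
/- Let P and Q be sets of prime numbers, and let A be a finite-index subgroup of the direct sum ⨁_{p ∈ P} ℤ/pℤ and B a finite-index subgroup of ⨁_{q ∈ Q} ℤ/qℤ. If A and B are isomorphic as groups, then the symmetric difference P Δ Q is finite. In particular, if the symmetric difference of P and Q is infinite, then ⨁_{p ∈ P} ℤ/pℤ and ⨁_{q ∈ Q} ℤ/qℤ have no isomorphic finite-index subgroups (they are not virtually isomorphic). -/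
open DirectSum
open scoped symmDiff

/-! If `p ∈ P \ Q` does not divide the index `n` of `A`, then `n • single p 1` is a nonzero element
of `A` killed by `p`. Its image in `B` is then a nonzero element killed by `p`, which cannot exist
since `p` is invertible in every `ZMod q` with `q ∈ Q`. Hence `P \ Q` consists of divisors of the
index of `A`, and symmetrically for `Q \ P`. -/

theorem DirectSum.eq_zero_of_nsmul_eq_zero_of_coprime {ι : Type*} {n : ι → ℕ} {m : ℕ}
    (hm : ∀ i, m.Coprime (n i)) {x : ⨁ i, ZMod (n i)} (hx : m • x = 0) : x = 0 := by
  ext i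
  have hxi : (m : ZMod (n i)) * x i = 0 := by
    rw [← nsmul_eq_mul, ← DFinsupp.nsmul_apply, hx, zero_apply]
  exact ((ZMod.isUnit_iff_coprime m (n i)).mpr (hm i)).mul_right_eq_zero.mp hxi

theorem DirectSum.exists_mem_ne_zero_nsmul_eq_zero_of_not_dvd_index {ι : Type*} [DecidableEq ι]
    {n : ι → ℕ} (A : AddSubgroup (⨁ i, ZMod (n i))) (i : ι) (hi : ¬ n i ∣ A.index) :
    ∃ a ∈ A, a ≠ 0 ∧ n i • a = 0 := by
  refine ⟨A.index • of _ i 1, A.nsmul_index_mem _, ?_, ?_⟩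
  · rw [← map_nsmul, nsmul_one, Ne, map_eq_zero_iff _ (of_injective i), ZMod.natCast_eq_zero_iff]
    exact hi
  · rw [smul_comm, ← map_nsmul, nsmul_one, ZMod.natCast_self, map_zero, smul_zero]

theorem diff_subset_divisors_index {P Q : Set ℕ} (hP : ∀ p ∈ P, p.Prime)
    (hQ : ∀ q ∈ Q, q.Prime) (A : AddSubgroup (⨁ p : P, ZMod (p : ℕ)))
    (B : AddSubgroup (⨁ q : Q, ZMod (q : ℕ))) (hA : A.FiniteIndex) (φ : A ≃+ B) :
    P \ Q ⊆ A.index.divisors := by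
  rintro p ⟨hpP, hpQ⟩
  rw [Finset.mem_coe, Nat.mem_divisors, and_iff_left hA.index_ne_zero]
  by_contra hdvd
  obtain ⟨a, haA, ha0, hpa⟩ :=
    exists_mem_ne_zero_nsmul_eq_zero_of_not_dvd_index A ⟨p, hpP⟩ hdvd
  have hcop : ∀ q : Q, p.Coprime q := fun q =>
    (Nat.coprime_primes (hP p hpP) (hQ q q.2)).mpr fun h => hpQ (h ▸ q.2)
  have hb : ((φ ⟨a, haA⟩ : B) : ⨁ q : Q, ZMod (q : ℕ)) = 0 := by
    refine eq_zero_of_nsmul_eq_zero_of_coprime hcop ?_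
    rw [← AddSubgroup.coe_nsmul, ← map_nsmul, show p • (⟨a, haA⟩ : A) = 0 from Subtype.ext hpa,
      map_zero, AddSubgroup.coe_zero]
  have ha : (⟨a, haA⟩ : A) = 0 := φ.map_eq_zero_iff.mp (Subtype.ext hb)
  exact ha0 (congrArg Subtype.val ha)

/-- If `P, Q` are sets of primes and some finite-index subgroup of `⨁_{p ∈ P} ℤ/pℤ` is
isomorphic to some finite-index subgroup of `⨁_{q ∈ Q} ℤ/qℤ`, then the symmetric difference
`P ∆ Q` is finite. -/
theorem stmt14 (P Q : Set ℕ) (hP : ∀ p ∈ P, p.Prime) (hQ : ∀ q ∈ Q, q.Prime)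
    (A : AddSubgroup (⨁ p : P, ZMod (p : ℕ))) (B : AddSubgroup (⨁ q : Q, ZMod (q : ℕ)))
    (hA : A.FiniteIndex) (hB : B.FiniteIndex)
    (hiso : Nonempty (A ≃+ B)) :
    (P ∆ Q).Finite := by
  obtain ⟨φ⟩ := hiso
  rw [Set.symmDiff_def]
  exact ((Finset.finite_toSet _).subset (diff_subset_divisors_index hP hQ A B hA φ)).union
    ((Finset.finite_toSet _).subset (diff_subset_divisors_index hQ hP B A hB φ.symm))
end

section
/- Let G be a countable group acting on a countable set S such that for every finite subset S₀ ⊆ S there exists a finite subset F₀ ⊆ G with (g • S₀) ∩ S₀ = ∅ for all g ∈ G \ F₀. Let (Ω₀, ν₀) be a probability space, X = Π_{s ∈ S} Ω₀ with the product probability measure μ = ⨂_{s ∈ S} ν₀, and let σ be the generalized Bernoulli shift action of G on X given by (g • x)(s) = x(g⁻¹ • s). Then σ is mixing: for all measurable subsets A, B ⊆ X, the function g ↦ μ((g • A) ∩ B) tends to μ(A) · μ(B) along the cofinite filter on G. -/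
/-!
The hypothesis on μ identifies it with the infinite product measure, for which every shift
`x ↦ x ∘ (g • ·)` is measure preserving. Two cylinder sets depending on the finite sets of
coordinates `I` and `J` become independent after shifting the first one by any `g` with
`g • I` disjoint from `J`, which holds for all but finitely many `g`. Since the correlation
`μ(T⁻¹ A ∩ B)` is 2-Lipschitz in `(A, B)` for the metric `μ(A ∆ A')`, uniformly over
measure-preserving `T`, convergence on the dense family of cylinder sets propagates to all
measurable sets.
-/

open MeasureTheory Filter Set ProbabilityTheory
open scoped symmDiff Topology

theorem Set.inter_symmDiff_inter_subset {α : Type*} (s s' t t' : Set α) :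
    (s ∩ t) ∆ (s' ∩ t') ⊆ s ∆ s' ∪ t ∆ t' := by
  intro x
  simp only [mem_symmDiff, mem_inter_iff, mem_union]
  tauto

section Mixing

variable {X ι : Type*} [MeasurableSpace X] {μ : Measure X} [IsFiniteMeasure μ]

theorem MeasureTheory.MeasurePreserving.abs_measureReal_preimage_inter_sub_le {T : X → X}
    (hT : MeasurePreserving T μ μ) {s s' t t' : Set X} (hs : MeasurableSet s)
    (hs' : MeasurableSet s') (ht : MeasurableSet t) (ht' : MeasurableSet t') :
    |μ.real (T ⁻¹' s ∩ t) - μ.real (T ⁻¹' s' ∩ t')| ≤ μ.real (s ∆ s') + μ.real (t ∆ t') :=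
  calc |μ.real (T ⁻¹' s ∩ t) - μ.real (T ⁻¹' s' ∩ t')|
      ≤ μ.real ((T ⁻¹' s ∩ t) ∆ (T ⁻¹' s' ∩ t')) :=
        abs_measureReal_sub_le_measureReal_symmDiff
          ((hT.measurable hs).inter ht).nullMeasurableSet
          ((hT.measurable hs').inter ht').nullMeasurableSet
    _ ≤ μ.real (T ⁻¹' (s ∆ s') ∪ t ∆ t') :=
        measureReal_mono (by rw [preimage_symmDiff]; exact inter_symmDiff_inter_subset ..)
    _ ≤ μ.real (T ⁻¹' (s ∆ s')) + μ.real (t ∆ t') := measureReal_union_le _ _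
    _ = μ.real (s ∆ s') + μ.real (t ∆ t') := by
        rw [hT.measureReal_preimage (hs.symmDiff hs').nullMeasurableSet]

theorem tendsto_measureReal_preimage_inter_of_dense {T : ι → X → X}
    (hT : ∀ i, MeasurePreserving (T i) μ μ) {l : Filter ι} {D : Set (MeasuredSets μ)}
    (hD : Dense D)
    (hmix : ∀ s ∈ D, ∀ t ∈ D,
      Tendsto (fun i ↦ μ.real (T i ⁻¹' s ∩ t)) l (𝓝 (μ.real s * μ.real t)))
    (s t : MeasuredSets μ) :
    Tendsto (fun i ↦ μ.real (T i ⁻¹' s ∩ t)) l (𝓝 (μ.real s * μ.real t)) := by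
  set F : ι → MeasuredSets μ × MeasuredSets μ → ℝ := fun i p ↦ μ.real (T i ⁻¹' p.1 ∩ p.2)
  have hF : Equicontinuous F := by
    refine (LipschitzWith.uniformEquicontinuous F 2 fun i ↦ ?_).equicontinuous
    refine LipschitzWith.of_dist_le_mul fun p q ↦ ?_
    rw [Real.dist_eq, Prod.dist_eq, MeasuredSets.dist_def, MeasuredSets.dist_def]
    refine ((hT i).abs_measureReal_preimage_inter_sub_le p.1.2 q.1.2 p.2.2 q.2.2).trans ?_
    rw [NNReal.coe_two, two_mul]
    exact add_le_add (le_max_left _ _) (le_max_right _ _)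
  have hprod : Continuous fun p : MeasuredSets μ × MeasuredSets μ ↦ μ.real p.1 * μ.real p.2 :=
    (MeasuredSets.lipschitzWith_measureReal.continuous.comp continuous_fst).mul
      (MeasuredSets.lipschitzWith_measureReal.continuous.comp continuous_snd)
  have hclosed := hF.isClosed_setOfPred_tendsto (l := l) hprod
  have hall : D ×ˢ D ⊆ {p | Tendsto (F · p) l (𝓝 (μ.real p.1 * μ.real p.2))} :=
    fun p hp ↦ hmix _ hp.1 _ hp.2
  rw [← hclosed.closure_subset_iff, (hD.prod hD).closure_eq] at hall
  exact hall (mem_univ (s, t))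

end Mixing

theorem dense_measurableCylinders {ι : Type*} {α : ι → Type*} [∀ i, MeasurableSpace (α i)]
    (μ : Measure (∀ i, α i)) [IsFiniteMeasure μ] :
    Dense ((SetLike.coe : MeasuredSets μ → Set (∀ i, α i)) ⁻¹' measurableCylinders α) :=
  dense_of_generateFrom_isSetRing isSetAlgebra_measurableCylinders.isSetRing
    ⟨{univ}, countable_singleton _, singleton_subset_iff.2 (univ_mem_measurableCylinders _),
      by simp⟩ generateFrom_measurableCylinders.symm

section BernoulliShift

variable {S Ω : Type*} [MeasurableSpace Ω]

theorem measurePreserving_comp_equiv_infinitePi (ν : Measure Ω) [IsProbabilityMeasure ν]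
    {α : Type*} (e : α ≃ S) :
    MeasurePreserving (fun x : S → Ω ↦ x ∘ e) (Measure.infinitePi fun _ ↦ ν)
      (Measure.infinitePi fun _ ↦ ν) :=
  ⟨by fun_prop, by
    convert Measure.infinitePi_map_piCongrLeft (fun _ : α ↦ ν) e.symm
    ext x : 2
    simp [MeasurableEquiv.coe_piCongrLeft, Equiv.piCongrLeft_apply]⟩

theorem indepFun_comp_restrict_of_disjoint {μ : Measure (S → Ω)}
    (h : iIndepFun (fun s (x : S → Ω) ↦ x s) μ) {I J : Finset S} {φ : S → S}
    (hφ : ∀ i ∈ I, φ i ∉ J) :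
    IndepFun (fun x (i : I) ↦ x (φ i)) J.restrict μ := by
  classical
  replace hφ : Disjoint (I.image φ) J := by simpa [Finset.disjoint_left] using hφ
  have hJ := h.indepFun_finset (I.image φ) J hφ measurable_pi_apply
  exact hJ.comp (φ := fun y (i : I) ↦ y ⟨φ i, Finset.mem_image_of_mem φ i.2⟩) (ψ := id)
    (by fun_prop) measurable_id

theorem tendsto_measureReal_comp_smul_inter_cylinder {G : Type*} [Group G] [MulAction G S]
    (hprop : ∀ S₀ : Finset S, ∃ F₀ : Finset G, ∀ g : G, g ∉ F₀ → ∀ s ∈ S₀, g • s ∉ S₀)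
    (ν : Measure Ω) [IsProbabilityMeasure ν] {I J : Finset S} {U : Set (I → Ω)}
    {V : Set (J → Ω)} (hU : MeasurableSet U) (hV : MeasurableSet V) :
    Tendsto (fun g : G ↦ (Measure.infinitePi fun _ ↦ ν).real
        ((fun x s ↦ x (g • s)) ⁻¹' cylinder I U ∩ cylinder J V)) cofinite
      (𝓝 ((Measure.infinitePi fun _ ↦ ν).real (cylinder I U) *
        (Measure.infinitePi fun _ ↦ ν).real (cylinder J V))) := by
  classical
  obtain ⟨F₀, hF₀⟩ := hprop (I ∪ J)
  refine tendsto_const_nhds.congr' ?_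
  filter_upwards [F₀.eventually_cofinite_notMem] with g hg
  have hdisj : ∀ i ∈ I, g • i ∉ J := fun i hi hJ ↦
    hF₀ g hg i (Finset.mem_union_left J hi) (Finset.mem_union_right I hJ)
  have hindep := indepFun_comp_restrict_of_disjoint
    (iIndepFun_infinitePi (P := fun _ : S ↦ ν) fun _ ↦ measurable_id) hdisj
  have hpres : (Measure.infinitePi fun _ ↦ ν) ((fun x (i : I) ↦ x (g • (i : S))) ⁻¹' U) =
      (Measure.infinitePi fun _ ↦ ν) (cylinder I U) :=
    (measurePreserving_comp_equiv_infinitePi ν (MulAction.toPerm g)).measure_preimage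
      (hU.cylinder I).nullMeasurableSet
  have hinter := hindep.measure_inter_preimage_eq_mul U V hU hV
  rw [hpres] at hinter
  simp only [measureReal_def, ← ENNReal.toReal_mul]
  exact congrArg ENNReal.toReal hinter.symm

end BernoulliShift

theorem stmt16_general {G S : Type*} [Group G] [MulAction G S]
    (hprop : ∀ S₀ : Finset S, ∃ F₀ : Finset G, ∀ g : G, g ∉ F₀ → ∀ s ∈ S₀, g • s ∉ S₀)
    {Ω₀ : Type*} [MeasurableSpace Ω₀] (ν₀ : Measure Ω₀) [IsProbabilityMeasure ν₀]
    (μ : Measure (S → Ω₀))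
    (hμ : ∀ (t : Finset S) (A : S → Set Ω₀), (∀ s ∈ t, MeasurableSet (A s)) →
      μ {x : S → Ω₀ | ∀ s ∈ t, x s ∈ A s} = ∏ s ∈ t, ν₀ (A s))
    (A B : Set (S → Ω₀)) (hA : MeasurableSet A) (hB : MeasurableSet B) :
    Tendsto (fun g : G => μ (((fun x : S → Ω₀ => fun s : S => x (g⁻¹ • s)) '' A) ∩ B))
      cofinite (nhds (μ A * μ B)) := by
  obtain rfl : μ = Measure.infinitePi fun _ ↦ ν₀ :=
    Measure.eq_infinitePi _ fun t C hC ↦ by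
      simpa [Set.pi] using hμ t C fun s _ ↦ hC s
  have himage (g : G) : (fun x : S → Ω₀ ↦ fun s ↦ x (g⁻¹ • s)) '' A =
      (fun x s ↦ x (g • s)) ⁻¹' A :=
    congrFun (image_eq_preimage_of_inverse (fun x ↦ by simp) (fun x ↦ by simp)) A
  simp_rw [himage]
  rw [← ENNReal.tendsto_toReal_iff (fun _ ↦ measure_ne_top _ _) (by finiteness),
    ENNReal.toReal_mul]
  refine tendsto_measureReal_preimage_inter_of_dense
    (fun g ↦ measurePreserving_comp_equiv_infinitePi ν₀ (MulAction.toPerm g))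
    (dense_measurableCylinders _) ?_ ⟨A, hA⟩ ⟨B, hB⟩
  intro s hs t ht
  obtain ⟨I, U, hU, hs⟩ := (mem_measurableCylinders _).1 hs
  obtain ⟨J, V, hV, ht⟩ := (mem_measurableCylinders _).1 ht
  rw [hs, ht]
  exact tendsto_measureReal_comp_smul_inter_cylinder hprop ν₀ hU hV

/-- If the action of a countable group `G` on a countable set `S` has the property that every
finite `S₀ ⊆ S` is moved off itself by all but finitely many `g ∈ G`, then the generalized
Bernoulli shift action of `G` on `(Π_{s ∈ S} Ω₀, ⨂_{s ∈ S} ν₀)` is mixing: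
`μ((g • A) ∩ B) → μ(A)·μ(B)` along the cofinite filter on `G`. The product measure `μ` is
specified by its values on cylinder sets. -/
theorem stmt16 {G S : Type*} [Group G] [Countable G] [Countable S] [MulAction G S]
    (hprop : ∀ S₀ : Finset S, ∃ F₀ : Finset G, ∀ g : G, g ∉ F₀ → ∀ s ∈ S₀, g • s ∉ S₀)
    {Ω₀ : Type*} [MeasurableSpace Ω₀] (ν₀ : Measure Ω₀) [IsProbabilityMeasure ν₀]
    (μ : Measure (S → Ω₀)) [IsProbabilityMeasure μ]
    (hμ : ∀ (t : Finset S) (A : S → Set Ω₀), (∀ s ∈ t, MeasurableSet (A s)) →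
      μ {x : S → Ω₀ | ∀ s ∈ t, x s ∈ A s} = ∏ s ∈ t, ν₀ (A s))
    (A B : Set (S → Ω₀)) (hA : MeasurableSet A) (hB : MeasurableSet B) :
    Tendsto (fun g : G => μ (((fun x : S → Ω₀ => fun s : S => x (g⁻¹ • s)) '' A) ∩ B))
      cofinite (nhds (μ A * μ B)) :=
  stmt16_general hprop ν₀ μ hμ A B hA hB
end

section
/- Let G be a countable group acting on a countable set S, and let H ≤ G be a subgroup such that for every finite subset S₀ ⊆ S the set {h ∈ H | (h • S₀) ∩ S₀ = ∅} is infinite. Let (Ω₀, ν₀) be a probability space, X = Π_{s ∈ S} Ω₀ with the product probability measure μ = ⨂_{s ∈ S} ν₀, and let σ be the generalized Bernoulli shift action of G on X given by (g • x)(s) = x(g⁻¹ • s). Then the restriction of σ to H is weakly mixing: the diagonal action of H on (X × X, μ ⊗ μ), h • (x,y) = (h • x, h • y), is ergodic. -/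
/-!
Let `A` be an `H`-invariant set. Up to `ε`, `A` is a cylinder set `B` depending only on the
coordinates in a finite set `t`. If `h ∈ H` moves `t` off itself, then `B` and `h • B` depend on
disjoint sets of coordinates, so they are independent, while `h • A = A` almost everywhere. Hence
`μ A ≈ μ (A ∩ h • A) ≈ μ (B ∩ h • B) = (μ B)² ≈ (μ A)²`, so `μ A = (μ A)²`.
The diagonal action on the square of the shift over `S` is the shift over `S ⊕ S`, and moving
finite subsets of `S` off themselves also moves finite subsets of `S ⊕ S` off themselves.
-/

open MeasureTheory ProbabilityTheory Filter Set MeasurableSpace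
open scoped symmDiff Pointwise

namespace MeasureTheory

variable {Ω : Type*} [MeasurableSpace Ω] {μ : Measure Ω} [IsProbabilityMeasure μ]

theorem eventuallyConst_ae_iff_measure_eq_zero_or_one {A : Set Ω} (hA : MeasurableSet A) :
    EventuallyConst A (ae μ) ↔ μ A = 0 ∨ μ A = 1 := by
  rw [eventuallyConst_set', ae_eq_empty, ae_eq_univ, prob_compl_eq_zero_iff hA]

theorem abs_measureReal_sub_sq_le {A B : Set Ω} {T : Ω → Ω} (hA : MeasurableSet A)
    (hB : MeasurableSet B) (hT : MeasurePreserving T μ μ) (hTA : T ⁻¹' A =ᵐ[μ] A)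
    (hBT : μ (B ∩ T ⁻¹' B) = μ B * μ (T ⁻¹' B)) :
    |μ.real A - μ.real A ^ 2| ≤ 4 * μ.real (A ∆ B) := by
  set d := μ.real (A ∆ B)
  have hAA : μ.real (A ∩ T ⁻¹' A) = μ.real A := by
    simpa using measureReal_congr ((EventuallyEq.refl _ A).inter hTA)
  have hBB : μ.real (B ∩ T ⁻¹' B) = μ.real B ^ 2 := by
    rw [measureReal_def, hBT, hT.measure_preimage hB.nullMeasurableSet, ENNReal.toReal_mul, sq]
    rfl
  have hsub : (A ∩ T ⁻¹' A) ∆ (B ∩ T ⁻¹' B) ⊆ A ∆ B ∪ T ⁻¹' (A ∆ B) := by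
    intro x
    simp only [mem_symmDiff, mem_union, mem_inter_iff, mem_preimage]
    tauto
  have hAB : |μ.real A - μ.real B| ≤ d :=
    abs_measureReal_sub_le_measureReal_symmDiff' hA.nullMeasurableSet hB.nullMeasurableSet
      (measure_ne_top _ _) (measure_ne_top _ _)
  have hsq : |μ.real A - μ.real B ^ 2| ≤ 2 * d := by
    rw [← hAA, ← hBB]
    calc _ ≤ μ.real ((A ∩ T ⁻¹' A) ∆ (B ∩ T ⁻¹' B)) :=
          abs_measureReal_sub_le_measureReal_symmDiff'
            (hA.inter (hT.measurable hA)).nullMeasurableSet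
            (hB.inter (hT.measurable hB)).nullMeasurableSet
            (measure_ne_top _ _) (measure_ne_top _ _)
      _ ≤ μ.real (A ∆ B ∪ T ⁻¹' (A ∆ B)) := measureReal_mono hsub
      _ ≤ d + μ.real (T ⁻¹' (A ∆ B)) := measureReal_union_le _ _
      _ = 2 * d := by rw [hT.measureReal_preimage (hA.symmDiff hB).nullMeasurableSet]; ring
  have hsum : |μ.real B + μ.real A| ≤ 2 := by
    rw [abs_le]
    constructor <;> linarith [measureReal_nonneg (μ := μ) (s := A),
      measureReal_nonneg (μ := μ) (s := B), measureReal_le_one (μ := μ) (s := A),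
      measureReal_le_one (μ := μ) (s := B)]
  have hsq' : |μ.real B ^ 2 - μ.real A ^ 2| ≤ 2 * d := by
    rw [show μ.real B ^ 2 - μ.real A ^ 2 = (μ.real B - μ.real A) * (μ.real B + μ.real A) by ring,
      abs_mul, abs_sub_comm]
    nlinarith [abs_nonneg (μ.real B + μ.real A), abs_nonneg (μ.real A - μ.real B)]
  calc |μ.real A - μ.real A ^ 2|
      ≤ |μ.real A - μ.real B ^ 2| + |μ.real B ^ 2 - μ.real A ^ 2| := abs_sub_le _ _ _
    _ ≤ 4 * d := by linarith

theorem measure_eq_zero_or_one_of_forall_approx_indep {A : Set Ω} (hA : MeasurableSet A)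
    (h : ∀ ε > 0, ∃ B, MeasurableSet B ∧ μ.real (A ∆ B) < ε ∧ ∃ T : Ω → Ω,
      MeasurePreserving T μ μ ∧ T ⁻¹' A =ᵐ[μ] A ∧ μ (B ∩ T ⁻¹' B) = μ B * μ (T ⁻¹' B)) :
    μ A = 0 ∨ μ A = 1 := by
  have hsq : μ.real A - μ.real A ^ 2 = 0 := by
    refine abs_nonpos_iff.mp (le_of_forall_pos_le_add fun ε hε => ?_)
    obtain ⟨B, hB, hAB, T, hT, hTA, hBT⟩ := h (ε / 4) (by positivity)
    linarith [abs_measureReal_sub_sq_le hA hB hT hTA hBT]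
  have hreal : μ.real A = 0 ∨ μ.real A = 1 := by
    have : μ.real A * (1 - μ.real A) = 0 := by linear_combination hsq
    rcases mul_eq_zero.mp this with h0 | h1
    exacts [.inl h0, .inr (by linarith)]
  exact hreal.imp (measureReal_eq_zero_iff (by finiteness)).mp (ENNReal.toReal_eq_one_iff _).mp

end MeasureTheory

namespace MeasurableSpace

variable {ι : Type*} {X : ι → Type*} [∀ i, MeasurableSpace (X i)]

abbrev piSubset (t : Set ι) : MeasurableSpace (∀ i, X i) :=
  ⨆ i ∈ t, MeasurableSpace.comap (fun x => x i) inferInstance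

theorem measurable_eval_piSubset {t : Set ι} {i : ι} (hi : i ∈ t) :
    Measurable[piSubset t] (fun x : ∀ i, X i => x i) :=
  Measurable.of_comap_le (le_iSup₂_of_le (f := fun i (_ : i ∈ t) =>
    MeasurableSpace.comap (fun x : ∀ i, X i => x i) inferInstance) i hi le_rfl)

theorem piSubset_le_pi (t : Set ι) : piSubset (X := X) t ≤ MeasurableSpace.pi :=
  iSup₂_le fun i _ => (measurable_pi_apply i).comap_le

theorem exists_measurableSet_piSubset_of_mem_measurableCylinders {B : Set (∀ i, X i)}
    (hB : B ∈ measurableCylinders X) : ∃ s : Finset ι, MeasurableSet[piSubset (s : Set ι)] B := by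
  obtain ⟨s, S, hS, rfl⟩ := (mem_measurableCylinders B).mp hB
  have hrestrict : Measurable[piSubset (s : Set ι)] (s.restrict (π := X)) :=
    @measurable_pi_lambda _ _ _ (piSubset (s : Set ι)) _ _ fun i => measurable_eval_piSubset i.2
  exact ⟨s, hrestrict hS⟩

end MeasurableSpace

theorem ProbabilityTheory.indep_piSubset_infinitePi {ι : Type*} {X : ι → Type*}
    [∀ i, MeasurableSpace (X i)] (μ : ∀ i, Measure (X i)) [∀ i, IsProbabilityMeasure (μ i)]
    {s t : Set ι} (hst : Disjoint s t) :
    Indep (piSubset s) (piSubset t) (Measure.infinitePi μ) :=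
  indep_iSup_of_disjoint (fun i => (measurable_pi_apply i).comap_le)
    (iIndepFun_infinitePi (X := fun _ => id) fun _ => measurable_id).iIndep hst

theorem MeasureTheory.Measure.infinitePi_map_sumPiEquivProdPi {ι κ : Type*} {X : ι ⊕ κ → Type*}
    [∀ i, MeasurableSpace (X i)] (μ : ∀ i, Measure (X i)) [∀ i, IsProbabilityMeasure (μ i)] :
    (infinitePi μ).map (MeasurableEquiv.sumPiEquivProdPi X) =
      (infinitePi fun i => μ (.inl i)).prod (infinitePi fun j => μ (.inr j)) := by
  set e := MeasurableEquiv.sumPiEquivProdPi X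
  suffices h : ((infinitePi fun i => μ (.inl i)).prod (infinitePi fun j => μ (.inr j))).map e.symm
      = infinitePi μ by
    rw [← h, map_map e.measurable e.symm.measurable, e.self_comp_symm, map_id]
  refine eq_infinitePi μ fun s t ht => ?_
  have hpre : e.symm ⁻¹' (Set.pi ↑s t) =
      Set.pi ↑s.toLeft (fun i => t (.inl i)) ×ˢ Set.pi ↑s.toRight (fun j => t (.inr j)) := by
    ext ⟨x, y⟩
    simp [e, MeasurableEquiv.coe_sumPiEquivProdPi_symm, Sum.forall]
  rw [e.symm.map_apply, hpre, prod_prod, infinitePi_pi _ fun i _ => ht _,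
    infinitePi_pi _ fun j _ => ht _, ← Finset.prod_disjSum (f := fun i => μ i (t i)),
    Finset.toLeft_disjSum_toRight]

theorem ErgodicSMul.map_measurableEquiv {G α β : Type*} [SMul G α] [SMul G β]
    [MeasurableSpace α] [MeasurableSpace β] {μ : Measure α} [ErgodicSMul G α μ] (e : α ≃ᵐ β)
    (he : ∀ (g : G) x, e (g • x) = g • e x) :
    ErgodicSMul G β (μ.map e) := by
  have hcomm : ∀ (g : G) (s : Set β), e ⁻¹' ((g • ·) ⁻¹' s) = (g • ·) ⁻¹' (e ⁻¹' s) := by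
    intro g s; ext x; simp [he]
  have : SMulInvariantMeasure G β (μ.map e) := ⟨fun g s hs => by
    rw [e.map_apply, e.map_apply, hcomm, measure_preimage_smul_of_nullMeasurableSet]
    exact (e.measurable hs).nullMeasurableSet⟩
  refine ⟨fun {s} hs hinv => ?_⟩
  rw [← e.map_ae, ← eventuallyConst_preimage]
  refine aeconst_of_forall_preimage_smul_ae_eq (G := G) (μ := μ) (e.measurable hs) fun g => ?_
  rw [← hcomm]
  exact ae_eq_comp (f := e) e.measurable.aemeasurable (hinv g)

-- The generalized Bernoulli shift `(g • x) i = x (g⁻¹ • i)` is Mathlib's `arrowAction`.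
attribute [local instance] arrowAction

section BernoulliShift

variable {G ι Ω₀ : Type*} [Group G] [MulAction G ι] [MeasurableSpace Ω₀]

theorem measurable_arrow_smul (g : G) : Measurable (g • · : (ι → Ω₀) → ι → Ω₀) :=
  measurable_pi_lambda _ fun _ => measurable_pi_apply _

theorem measurable_arrow_smul_piSubset (g : G) (t : Set ι) :
    Measurable[piSubset (g⁻¹ • t), piSubset t] (g • · : (ι → Ω₀) → ι → Ω₀) := by
  refine measurable_iff_comap_le.mpr ?_
  simp only [MeasurableSpace.comap_iSup, MeasurableSpace.comap_comp]
  exact iSup₂_le fun i hi => (measurable_eval_piSubset (smul_mem_smul_set hi)).comap_le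

theorem measurePreserving_arrow_smul_infinitePi (ν : Measure Ω₀) [IsProbabilityMeasure ν]
    (g : G) : MeasurePreserving (g • · : (ι → Ω₀) → ι → Ω₀)
      (Measure.infinitePi fun _ => ν) (Measure.infinitePi fun _ => ν) := by
  refine ⟨measurable_arrow_smul g, ?_⟩
  convert Measure.infinitePi_map_piCongrLeft (fun _ : ι => ν) (MulAction.toPerm g) using 2
  ext x i
  simp only [MeasurableEquiv.coe_piCongrLeft, Equiv.piCongrLeft_apply,
    MulAction.toPerm_symm_apply, eq_rec_constant]
  rfl

theorem ergodicSMul_infinitePi (ν : Measure Ω₀) [IsProbabilityMeasure ν]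
    (hG : ∀ t : Set ι, t.Finite → ∃ g : G, Disjoint t (g • t)) :
    ErgodicSMul G (ι → Ω₀) (Measure.infinitePi fun _ => ν) := by
  set μ := Measure.infinitePi fun _ : ι => ν
  have hpres := measurePreserving_arrow_smul_infinitePi (G := G) (ι := ι) ν
  have : SMulInvariantMeasure G (ι → Ω₀) μ :=
    ⟨fun g _ hs => (hpres g).measure_preimage hs.nullMeasurableSet⟩
  refine ⟨fun {A} hA hinv => (eventuallyConst_ae_iff_measure_eq_zero_or_one hA).mpr ?_⟩
  refine measure_eq_zero_or_one_of_forall_approx_indep hA fun ε hε => ?_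
  obtain ⟨B, hBcyl, hBA⟩ := exists_measure_symmDiff_lt_of_generateFrom_isSetRing (μ := μ)
    isSetRing_measurableCylinders ⟨{univ}, countable_singleton _,
      singleton_subset_iff.mpr (univ_mem_measurableCylinders _), by simp⟩
    generateFrom_measurableCylinders.symm hA (ENNReal.ofReal_pos.mpr hε)
  obtain ⟨s, hBs⟩ := exists_measurableSet_piSubset_of_mem_measurableCylinders hBcyl
  obtain ⟨g, hg⟩ := hG s s.finite_toSet
  refine ⟨B, piSubset_le_pi _ _ hBs, ?_, (g⁻¹ • ·), hpres g⁻¹, hinv g⁻¹, ?_⟩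
  · rw [symmDiff_comm]
    exact ENNReal.toReal_lt_of_lt_ofReal hBA
  · have hT := measurable_arrow_smul_piSubset (Ω₀ := Ω₀) g⁻¹ (s : Set ι)
    rw [inv_inv] at hT
    exact (Indep_iff _ _ μ).mp (indep_piSubset_infinitePi (fun _ : ι => ν) hg) _ _ hBs (hT hBs)

theorem exists_disjoint_smul_sum (hG : ∀ t : Set ι, t.Finite → ∃ g : G, Disjoint t (g • t))
    (t : Set (ι ⊕ ι)) (ht : t.Finite) : ∃ g : G, Disjoint t (g • t) := by
  obtain ⟨g, hg⟩ := hG (Sum.inl ⁻¹' t ∪ Sum.inr ⁻¹' t)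
    ((ht.preimage Sum.inl_injective.injOn).union (ht.preimage Sum.inr_injective.injOn))
  refine ⟨g, Set.disjoint_left.mpr ?_⟩
  rintro _ hx ⟨(a | a), ha, rfl⟩
  · exact Set.disjoint_left.mp hg (.inl hx) (smul_mem_smul_set (.inl ha))
  · exact Set.disjoint_left.mp hg (.inr hx) (smul_mem_smul_set (.inr ha))

theorem ergodicSMul_prod_infinitePi (ν : Measure Ω₀) [IsProbabilityMeasure ν]
    (hG : ∀ t : Set ι, t.Finite → ∃ g : G, Disjoint t (g • t)) :
    ErgodicSMul G ((ι → Ω₀) × (ι → Ω₀))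
      ((Measure.infinitePi fun _ => ν).prod (Measure.infinitePi fun _ => ν)) := by
  have := ergodicSMul_infinitePi (ι := ι ⊕ ι) ν (exists_disjoint_smul_sum hG)
  rw [← Measure.infinitePi_map_sumPiEquivProdPi (fun _ : ι ⊕ ι => ν)]
  exact ErgodicSMul.map_measurableEquiv _ fun _ _ => rfl

end BernoulliShift

theorem stmt17_general {G S : Type*} [Group G] [MulAction G S]
    (H : Subgroup G)
    (hprop : ∀ S₀ : Finset S, {h : G | h ∈ H ∧ ∀ s ∈ S₀, h • s ∉ S₀}.Infinite)
    {Ω₀ : Type*} [MeasurableSpace Ω₀] (ν₀ : Measure Ω₀) [IsProbabilityMeasure ν₀]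
    (μ : Measure (S → Ω₀))
    (hμ : ∀ (t : Finset S) (A : S → Set Ω₀), (∀ s ∈ t, MeasurableSet (A s)) →
      μ {x : S → Ω₀ | ∀ s ∈ t, x s ∈ A s} = ∏ s ∈ t, ν₀ (A s)) :
    ∀ A : Set ((S → Ω₀) × (S → Ω₀)), MeasurableSet A →
      (∀ h ∈ H, (μ.prod μ)
        (((fun p : (S → Ω₀) × (S → Ω₀) =>
          (fun s : S => p.1 (h⁻¹ • s), fun s : S => p.2 (h⁻¹ • s))) '' A) ∆ A) = 0) →
      (μ.prod μ) A = 0 ∨ (μ.prod μ) A = 1 := by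
  intro A hA hinv
  obtain rfl : μ = Measure.infinitePi fun _ => ν₀ :=
    Measure.eq_infinitePi _ fun t B hB => hμ t B fun s _ => hB s
  have hH : ∀ t : Set S, t.Finite → ∃ h : H, Disjoint t (h • t) := by
    intro t ht
    obtain ⟨h, hmem, hmove⟩ := (hprop ht.toFinset).nonempty
    refine ⟨⟨h, hmem⟩, Set.disjoint_left.mpr ?_⟩
    rintro _ hx ⟨s, hs, rfl⟩
    exact hmove s (ht.mem_toFinset.mpr hs) (ht.mem_toFinset.mpr hx)
  have := ergodicSMul_prod_infinitePi ν₀ hH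
  refine (eventuallyConst_ae_iff_measure_eq_zero_or_one hA).mp ?_
  -- The image in `hinv` is, definitionally, `h • A` for the diagonal shift action.
  exact aeconst_of_forall_smul_ae_eq H hA.nullMeasurableSet fun h =>
    measure_symmDiff_eq_zero_iff.mp (hinv h h.2)

/-- If `H ≤ G` is a subgroup such that for every finite `S₀ ⊆ S` infinitely many `h ∈ H` move
`S₀` off itself, then the restriction to `H` of the generalized Bernoulli shift action of `G`
on `(Π_{s ∈ S} Ω₀, ⨂_{s ∈ S} ν₀)` is weakly mixing: the diagonal `H`-action on the square is
ergodic. The product measure `μ` is specified by its values on cylinder sets. -/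
theorem stmt17 {G S : Type*} [Group G] [Countable G] [Countable S] [MulAction G S]
    (H : Subgroup G)
    (hprop : ∀ S₀ : Finset S, {h : G | h ∈ H ∧ ∀ s ∈ S₀, h • s ∉ S₀}.Infinite)
    {Ω₀ : Type*} [MeasurableSpace Ω₀] (ν₀ : Measure Ω₀) [IsProbabilityMeasure ν₀]
    (μ : Measure (S → Ω₀)) [IsProbabilityMeasure μ]
    (hμ : ∀ (t : Finset S) (A : S → Set Ω₀), (∀ s ∈ t, MeasurableSet (A s)) →
      μ {x : S → Ω₀ | ∀ s ∈ t, x s ∈ A s} = ∏ s ∈ t, ν₀ (A s)) :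
    ∀ A : Set ((S → Ω₀) × (S → Ω₀)), MeasurableSet A →
      (∀ h ∈ H, (μ.prod μ)
        (((fun p : (S → Ω₀) × (S → Ω₀) =>
          (fun s : S => p.1 (h⁻¹ • s), fun s : S => p.2 (h⁻¹ • s))) '' A) ∆ A) = 0) →
      (μ.prod μ) A = 0 ∨ (μ.prod μ) A = 1 :=
  stmt17_general H hprop ν₀ μ hμ
end

section
/- Let (Gᵢ)_{i ∈ ι} be a family of groups, let G = ∗_{i ∈ ι} Gᵢ be their free product (the coproduct of the family, with canonical injections of_i : Gᵢ → G), and let M be an abelian group on which G acts by group automorphisms. Call a function f : G → M a 1-cocycle if f(gh) = f(g) · (g • f(h)) for all g, h ∈ G. Then the restriction map sending a 1-cocycle f on G to the family (f ∘ of_i)_{i ∈ ι} is a bijection from the set of 1-cocycles on G with values in M onto the product over i ∈ ι of the sets of 1-cocycles on Gᵢ with values in M (where Gᵢ acts on M through of_i); moreover this bijection is a group isomorphism for pointwise multiplication of cocycles. -/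
/-- A 1-cocycle on a group `K` acting (via `φ`) by automorphisms on an abelian group `M`. -/
def IsCocycle {K M : Type*} [Group K] [CommGroup M] (φ : K →* MulAut M) (f : K → M) : Prop :=
  ∀ g h : K, f (g * h) = f g * φ g (f h)

/-- Pointwise multiplication of 1-cocycles (the cocycles form a group since `M` is abelian). -/
instance {K M : Type*} [Group K] [CommGroup M] (φ : K →* MulAut M) :
    Mul {f : K → M // IsCocycle φ f} :=
  ⟨fun f f' => ⟨fun g => f.1 g * f'.1 g, fun g h => by
    simp only []; rw [f.2 g h, f'.2 g h, map_mul]; exact mul_mul_mul_comm _ _ _ _⟩⟩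

/-- The restriction of a 1-cocycle on a free product `∗ᵢ Gᵢ` to the factors. -/
def restrictCocycle {ι : Type*} {Gs : ι → Type*} [∀ i, Group (Gs i)] {M : Type*} [CommGroup M]
    (φ : Monoid.CoprodI Gs →* MulAut M)
    (f : {f : Monoid.CoprodI Gs → M // IsCocycle φ f}) (i : ι) :
    {f : Gs i → M // IsCocycle (φ.comp Monoid.CoprodI.of) f} :=
  ⟨fun g => f.1 (Monoid.CoprodI.of g), fun g h => by
    simp only []; rw [map_mul]; exact f.2 _ _⟩

/-!
A 1-cocycle `f` on `K` is the same thing as a homomorphism `g ↦ (f g, g)` from `K` into the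
semidirect product `M ⋊ K` splitting the projection. Since `∗ᵢ Gᵢ` is a coproduct, homomorphisms
out of it are freely determined by their restrictions to the factors, and the splitting condition
can be checked on the factors too.
-/

open Monoid SemidirectProduct

namespace IsCocycle

variable {H K M : Type*} [Group H] [Group K] [CommGroup M] {φ : K →* MulAut M} {f f' : K → M}

theorem map_one (hf : IsCocycle φ f) : f 1 = 1 := by
  simpa using hf 1 1

@[simps]
def toSemidirectProduct (ψ : H →* K) {f : H → M} (hf : IsCocycle (φ.comp ψ) f) :
    H →* M ⋊[φ] K where
  toFun g := ⟨f g, ψ g⟩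
  map_one' := by ext <;> simp [hf.map_one]
  map_mul' g h := by ext <;> simp [hf g h]

theorem rightHom_comp_toSemidirectProduct (ψ : H →* K) {f : H → M}
    (hf : IsCocycle (φ.comp ψ) f) : rightHom.comp (hf.toSemidirectProduct ψ) = ψ :=
  rfl

theorem of_rightHom_comp_eq_id (σ : K →* M ⋊[φ] K) (hσ : rightHom.comp σ = .id K) :
    IsCocycle φ fun g => (σ g).left := by
  intro g h
  have hright (k : K) : (σ k).right = k := DFunLike.congr_fun hσ k
  have hmul := congrArg SemidirectProduct.left (map_mul σ g h)
  rwa [mul_left, hright] at hmul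

theorem eq_of_eqOn_of_closure_eq_top {s : Set K} (hs : Submonoid.closure s = ⊤)
    (hf : IsCocycle φ f) (hf' : IsCocycle φ f') (h : s.EqOn f f') : f = f' := by
  have hσ : hf.toSemidirectProduct (.id K) = hf'.toSemidirectProduct (.id K) :=
    MonoidHom.eq_of_eqOn_denseM hs fun _ hg => SemidirectProduct.ext (h hg) rfl
  funext g
  exact congrArg SemidirectProduct.left (DFunLike.congr_fun hσ g)

end IsCocycle

section FreeProduct

variable {ι : Type*} {Gs : ι → Type*} [∀ i, Group (Gs i)] {M : Type*} [CommGroup M]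
  (φ : CoprodI Gs →* MulAut M)

theorem restrictCocycle_injective : Function.Injective (restrictCocycle φ) := by
  intro f f' h
  apply Subtype.ext
  refine f.2.eq_of_eqOn_of_closure_eq_top CoprodI.mclosure_iUnion_range_of f'.2 ?_
  rintro _ ⟨_, ⟨i, rfl⟩, g, rfl⟩
  exact congrFun (congrArg Subtype.val (congrFun h i)) g

theorem restrictCocycle_surjective : Function.Surjective (restrictCocycle φ) := by
  intro F
  let σ := CoprodI.lift fun i => (F i).2.toSemidirectProduct CoprodI.of
  have hσ : rightHom.comp σ = .id _ :=
    CoprodI.ext_hom _ _ fun i => by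
      rw [MonoidHom.comp_assoc, CoprodI.lift_comp_of,
        IsCocycle.rightHom_comp_toSemidirectProduct, MonoidHom.id_comp]
  refine ⟨⟨_, IsCocycle.of_rightHom_comp_eq_id σ hσ⟩, funext fun i => Subtype.ext ?_⟩
  funext g
  simp [restrictCocycle, σ]

theorem restrictCocycle_mul (f f' : {f : CoprodI Gs → M // IsCocycle φ f}) :
    restrictCocycle φ (f * f') = restrictCocycle φ f * restrictCocycle φ f' :=
  rfl

end FreeProduct

/-- Restriction to the factors is a bijection from the 1-cocycles on the free product
`∗ᵢ Gᵢ` with values in `M` onto the product of the sets of 1-cocycles on the `Gᵢ`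
(each acting on `M` through the canonical injection), and it is multiplicative for
pointwise multiplication of cocycles, hence a group isomorphism. -/
theorem stmt18 {ι : Type*} (Gs : ι → Type*) [∀ i, Group (Gs i)] (M : Type*) [CommGroup M]
    (φ : Monoid.CoprodI Gs →* MulAut M) :
    Function.Bijective (restrictCocycle φ) ∧
      ∀ f f' : {f : Monoid.CoprodI Gs → M // IsCocycle φ f},
        restrictCocycle φ (f * f') = restrictCocycle φ f * restrictCocycle φ f' :=
  ⟨⟨restrictCocycle_injective φ, restrictCocycle_surjective φ⟩, restrictCocycle_mul φ⟩
end

section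
/- Let (Gᵢ)_{i ∈ ι} be a family of groups with a distinguished index i₀ ∈ ι, let G = ∗_{i ∈ ι} Gᵢ be their free product with canonical injections of_i : Gᵢ → G, and let σ be a measure-preserving action of the countable group G on a probability space (X,μ) such that the restriction of σ to the subgroup of_{i₀}(G_{i₀}) is weakly mixing (the diagonal action of of_{i₀}(G_{i₀}) on (X × X, μ ⊗ μ) is ergodic). Let w be a 1-cocycle for σ such that for every g ∈ G_{i₀} the function w(of_{i₀}(g)) is μ-almost everywhere equal to a constant, and suppose w is a coboundary: there exists a measurable u : X → circle with w(g)(x) = u(g⁻¹ • x) · (u(x))⁻¹ for μ-a.e. x, for every g ∈ G. Then for every g ∈ G, w(g)(x) = 1 for μ-almost every x. -/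
open MeasureTheory Filter
open scoped symmDiff

/-- A probability measure on the circle taking only the values `0` and `1` on measurable
sets gives full mass to some singleton. -/
lemma zero_one_dirac (ν : Measure Circle) [IsProbabilityMeasure ν]
    (h : ∀ B : Set Circle, MeasurableSet B → ν B = 0 ∨ ν B = 1) :
    ∃ c : Circle, ν {c} = 1 := by
  obtain ⟨D, hDc, hDd⟩ := TopologicalSpace.exists_countable_dense Circle
  have key : ∀ n : ℕ, ∃ x : Circle, ν (Metric.ball x (1 / (n + 1))) = 1 := by
    intro n
    by_contra hc
    push_neg at hc
    have h0 : ∀ x : Circle, ν (Metric.ball x (1 / (n + 1))) = 0 :=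
      fun x => (h _ measurableSet_ball).resolve_right (hc x)
    have hcov : (Set.univ : Set Circle) ⊆ ⋃ x ∈ D, Metric.ball x (1 / (n + 1)) := by
      intro p _
      have hr : (0 : ℝ) < 1 / (n + 1) := by positivity
      obtain ⟨y, hy1, hy2⟩ := (Metric.dense_iff.mp hDd) p _ hr
      exact Set.mem_biUnion hy2 (by simpa [Metric.mem_ball, dist_comm] using hy1)
    have : ν (Set.univ : Set Circle) = 0 := by
      refine measure_mono_null hcov ?_
      exact (measure_biUnion_null_iff hDc).mpr fun x _ => h0 x
    simp [measure_univ] at this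
  choose f hf using key
  set K : Set Circle := ⋂ n, Metric.ball (f n) (1 / (n + 1)) with hK
  have hKc : ν Kᶜ = 0 := by
    have : Kᶜ = ⋃ n, (Metric.ball (f n) (1 / (n + 1)))ᶜ := by
      simp [hK, Set.compl_iInter]
    rw [this]
    refine measure_iUnion_null fun n => ?_
    rw [measure_compl measurableSet_ball (measure_ne_top _ _), hf n, measure_univ, tsub_self]
  have hK1 : ν K = 1 := by
    have hle : ν Set.univ ≤ ν K + ν Kᶜ := by
      rw [← Set.union_compl_self K] at *
      exact measure_union_le _ _
    rw [measure_univ, hKc, add_zero] at hle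
    exact le_antisymm prob_le_one hle
  have hKne : K.Nonempty := nonempty_of_measure_ne_zero (by rw [hK1]; exact one_ne_zero)
  obtain ⟨c, hc⟩ := hKne
  have hsub : K ⊆ {c} := by
    intro a ha
    have hdist : dist a c ≤ 0 := by
      by_contra hd
      push_neg at hd
      obtain ⟨n, hn⟩ := exists_nat_one_div_lt (by linarith : (0 : ℝ) < dist a c / 2)
      have h1 : dist a (f n) < 1 / (n + 1) := by
        have := Set.mem_iInter.mp ha n; simpa [Metric.mem_ball] using this
      have h2 : dist c (f n) < 1 / (n + 1) := by
        have := Set.mem_iInter.mp hc n; simpa [Metric.mem_ball] using this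
      have : dist a c < dist a c := by
        calc dist a c ≤ dist a (f n) + dist (f n) c := dist_triangle _ _ _
          _ < 1 / (n + 1) + 1 / (n + 1) := by rw [dist_comm (f n) c]; linarith
          _ < dist a c / 2 + dist a c / 2 := by linarith
          _ = dist a c := by ring
      exact lt_irrefl _ this
    have : dist a c = 0 := le_antisymm hdist dist_nonneg
    simpa [Set.mem_singleton_iff] using dist_eq_zero.mp this
  exact ⟨c, le_antisymm prob_le_one (hK1 ▸ measure_mono hsub)⟩

/-- Let `G = ∗ᵢ Gᵢ` be a free product acting on a probability space by a measure-preserving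
action whose restriction to the factor `G_{i₀}` is weakly mixing. If `w` is a 1-cocycle for
the action which is a.e. constant on the factor `G_{i₀}` and is a coboundary, then `w` is
trivial: `w(g) = 1` a.e. for every `g ∈ G`. -/
theorem stmt19 {ι : Type*} {Gs : ι → Type*} [∀ i, Group (Gs i)] (i₀ : ι)
    [Countable (Monoid.CoprodI Gs)]
    {X : Type*} [MeasurableSpace X] (μ : Measure X) [IsProbabilityMeasure μ]
    [MulAction (Monoid.CoprodI Gs) X]
    (hmp : ∀ g : Monoid.CoprodI Gs, MeasurePreserving (fun x : X => g • x) μ μ)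
    (hwmix : ∀ A : Set (X × X), MeasurableSet A →
      (∀ g : Gs i₀, (μ.prod μ)
        (((fun p : X × X => (Monoid.CoprodI.of g • p.1, Monoid.CoprodI.of g • p.2)) '' A)
          ∆ A) = 0) →
      (μ.prod μ) A = 0 ∨ (μ.prod μ) A = 1)
    (w : Monoid.CoprodI Gs → X → Circle) (hwmeas : ∀ g, Measurable (w g))
    (hwcoc : ∀ g h : Monoid.CoprodI Gs, ∀ᵐ x ∂μ, w (g * h) x = w g x * w h (g⁻¹ • x))
    (hconst : ∀ g : Gs i₀, ∃ z : Circle, w (Monoid.CoprodI.of g) =ᵐ[μ] fun _ => z)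
    (hcob : ∃ u : X → Circle, Measurable u ∧
      ∀ g : Monoid.CoprodI Gs, ∀ᵐ x ∂μ, w g x = u (g⁻¹ • x) * (u x)⁻¹) :
    ∀ g : Monoid.CoprodI Gs, ∀ᵐ x ∂μ, w g x = 1 := by
  obtain ⟨u, humeas, hu⟩ := hcob
  -- On the factor `G_{i₀}`, `u ∘ g⁻¹` is a constant multiple of `u`.
  have hz : ∀ g : Gs i₀, ∃ z : Circle,
      ∀ᵐ x ∂μ, u ((Monoid.CoprodI.of g)⁻¹ • x) = z * u x := by
    intro g
    obtain ⟨z, hzc⟩ := hconst g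
    refine ⟨z, ?_⟩
    filter_upwards [hzc, hu (Monoid.CoprodI.of g)] with x h1 h2
    have h3 : u ((Monoid.CoprodI.of g)⁻¹ • x) * (u x)⁻¹ = z := by rw [← h2, h1]
    exact mul_inv_eq_iff_eq_mul.mp h3
  -- The function `F (x, y) = u x * (u y)⁻¹` on the product space.
  set F : X × X → Circle := fun p => u p.1 * (u p.2)⁻¹ with hFdef
  have hF : Measurable F := (humeas.comp measurable_fst).mul (humeas.comp measurable_snd).inv
  -- F has a {0,1}-valued distribution, using weak mixing.
  have hzeroone : ∀ B : Set Circle, MeasurableSet B →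
      (μ.prod μ) (F ⁻¹' B) = 0 ∨ (μ.prod μ) (F ⁻¹' B) = 1 := by
    intro B hB
    refine hwmix _ (hF hB) ?_
    intro g
    obtain ⟨z, hzg⟩ := hz g
    -- The image of the preimage set under the diagonal action.
    have himg : ((fun p : X × X => (Monoid.CoprodI.of g • p.1, Monoid.CoprodI.of g • p.2)) ''
        (F ⁻¹' B)) =
        (fun p : X × X => ((Monoid.CoprodI.of g)⁻¹ • p.1, (Monoid.CoprodI.of g)⁻¹ • p.2)) ⁻¹'
          (F ⁻¹' B) := by
      ext p
      constructor
      · rintro ⟨q, hq, rfl⟩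
        simpa [inv_smul_smul] using hq
      · intro hp
        exact ⟨((Monoid.CoprodI.of g)⁻¹ • p.1, (Monoid.CoprodI.of g)⁻¹ • p.2), hp,
          by simp [smul_inv_smul]⟩
    set N : Set X := {x | ¬ u ((Monoid.CoprodI.of g)⁻¹ • x) = z * u x} with hN
    have hNnull : μ N = 0 := hzg
    refine measure_mono_null ?_ (show (μ.prod μ) ((N ×ˢ Set.univ) ∪ (Set.univ ×ˢ N)) = 0 by
      refine measure_union_null ?_ ?_ <;>
        simp [Measure.prod_prod, hNnull])
    intro p hp
    rw [himg] at hp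
    by_contra hpn
    have h1 : u ((Monoid.CoprodI.of g)⁻¹ • p.1) = z * u p.1 := by
      by_contra hh
      exact hpn (Or.inl ⟨hh, Set.mem_univ _⟩)
    have h2 : u ((Monoid.CoprodI.of g)⁻¹ • p.2) = z * u p.2 := by
      by_contra hh
      exact hpn (Or.inr ⟨Set.mem_univ _, hh⟩)
    have hFeq : F ((Monoid.CoprodI.of g)⁻¹ • p.1, (Monoid.CoprodI.of g)⁻¹ • p.2) = F p := by
      simp only [hFdef, h1, h2, mul_inv]
      rw [mul_mul_mul_comm, mul_inv_cancel, one_mul]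
    rcases hp with ⟨hp1, hp2⟩ | ⟨hp1, hp2⟩
    · exact hp2 (by simpa [Set.mem_preimage, hFeq] using hp1)
    · exact hp2 (by simpa [Set.mem_preimage, hFeq] using hp1)
  -- Hence the distribution of F is a Dirac mass: F is a.e. constant.
  have hmap : IsProbabilityMeasure ((μ.prod μ).map F) := Measure.isProbabilityMeasure_map hF.aemeasurable
  obtain ⟨c, hc⟩ := zero_one_dirac ((μ.prod μ).map F) (by
    intro B hB
    rw [Measure.map_apply hF hB]
    exact hzeroone B hB)
  have hFc : ∀ᵐ p ∂(μ.prod μ), F p = c := by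
    have h1 : (μ.prod μ) (F ⁻¹' {c}) = 1 := by
      rw [← Measure.map_apply hF (measurableSet_singleton c)]; exact hc
    have h2 : (μ.prod μ) (F ⁻¹' {c})ᶜ = 0 := by
      rw [measure_compl (hF (measurableSet_singleton c)) (measure_ne_top _ _), h1,
        measure_univ, tsub_self]
    filter_upwards [measure_eq_zero_iff_ae_notMem.mp h2] with p hp
    simpa [Set.mem_preimage] using hp
  -- Fubini: u is a.e. constant.
  have hae := Measure.ae_ae_of_ae_prod hFc
  have hne : (ae μ).NeBot := ae_neBot.mpr (IsProbabilityMeasure.ne_zero μ)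
  obtain ⟨x₀, hx₀⟩ := hae.exists
  have huconst : ∀ᵐ y ∂μ, u y = c⁻¹ * u x₀ := by
    filter_upwards [hx₀] with y hy
    have : u x₀ = c * u y := mul_inv_eq_iff_eq_mul.mp hy
    rw [this, ← mul_assoc, inv_mul_cancel, one_mul]
  -- Conclude: w g = 1 a.e.
  intro g
  have hcomp := (hmp g⁻¹).quasiMeasurePreserving.ae_eq_comp huconst
  filter_upwards [hu g, huconst, hcomp] with x h1 h2 h3
  simp only [Function.comp_apply] at h3
  rw [h1, h2, h3, mul_inv_cancel]
end
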